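/- arXiv:2001.02789 — 9 statements merged into one kernel-verified Lean document; each statement's English description precedes it below -/
import Mathlib

section
/- In any edge coloring of a complete graph (on at least 2 vertices) containing no rainbow triangle, there exists a nontrivial partition of the vertex set into at least two parts such that at most two colors appear on edges between distinct parts, and for each pair of distinct parts all edges between them have a single color. -/
open Finset

/-- A symmetric edge-coloring of a complete graph, given as a function on ordered
pairs of vertices. -/
def IsSymmColoring {V C : Type*} (c : V → V → C) : Prop := ∀ u v, c u v = c v u

/-- The coloring `c` contains a rainbow triangle: three vertices whose three
connecting edges get three distinct colors. -/
def HasRainbowTriangle {V C : Type*} (c : V → V → C) : Prop :=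
  ∃ u v w : V, u ≠ v ∧ u ≠ w ∧ v ≠ w ∧
    c u v ≠ c u w ∧ c u v ≠ c v w ∧ c u w ≠ c v w

/-- The coloring `c` contains a monochromatic triangle. -/
def HasMonoTriangle {V C : Type*} (c : V → V → C) : Prop :=
  ∃ u v w : V, u ≠ v ∧ u ≠ w ∧ v ≠ w ∧ c u v = c u w ∧ c u v = c v w

/-- The coloring `c` contains a monochromatic copy of the double star `S(n,m)`:
two adjacent centers `u, v`, a set `A` of `n` further leaves at `u` and a set `B`
of `m` further leaves at `v`, all edges in one color. -/
def HasMonoDoubleStar {V C : Type*} (c : V → V → C) (n m : ℕ) : Prop :=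
  ∃ (u v : V) (A B : Finset V) (col : C),
    u ≠ v ∧ A.card = n ∧ B.card = m ∧ Disjoint A B ∧
    u ∉ A ∧ u ∉ B ∧ v ∉ A ∧ v ∉ B ∧
    c u v = col ∧ (∀ a ∈ A, c u a = col) ∧ (∀ b ∈ B, c v b = col)

/-- Every `k`-edge-coloring of the complete graph on `N` vertices contains a
rainbow triangle or a monochromatic `S(n,m)` (so `gr_k(K_3 : S(n,m)) ≤ N`). -/
def grHolds (k n m N : ℕ) : Prop :=
  ∀ c : Fin N → Fin N → Fin k, IsSymmColoring c →
    HasRainbowTriangle c ∨ HasMonoDoubleStar c n m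

/-- There is a `k`-edge-coloring of the complete graph on `N` vertices with no
rainbow triangle and no monochromatic `S(n,m)` (so `gr_k(K_3 : S(n,m)) > N`). -/
def grAvoid (k n m N : ℕ) : Prop :=
  ∃ c : Fin N → Fin N → Fin k, IsSymmColoring c ∧
    ¬ HasRainbowTriangle c ∧ ¬ HasMonoDoubleStar c n m

/-!
Strong induction on the vertex set `s`. A module of `s` (at least two, but not all, vertices,
seen by every other vertex in a single color) can be collapsed to one vertex, and a Gallai
partition of the smaller set pulls back. So `s` may be assumed prime, and then every union of
color classes is connected. It remains to see that a prime `s` uses only two colors. Remove a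
vertex `z`. If `s - z` is two-colored, a third color at `z` spans, with `z`, a module. Otherwise,
by induction, an edge of a third color `γ` lies in a part of a Gallai partition of `s - z`,
together with its whole `γ`-component `S`; every other vertex of `s - z` sees `S` in one color.
Primality forces `z` to see `S` in two colors `p, q`, and triangles through `z` show that an edge
at `z` of any other color goes to a vertex seeing `S` in that same color. But the vertices seeing
`S` in a color other than `p, q` form a set closed under `γ`-edges and missing `S`, so there are
none, as `γ` is connected.
-/
namespace Gallai

variable {V C : Type*} {c : V → V → C} {s S : Finset V} {F : C → Prop} {γ c₁ c₂ : C}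
  {a u v w x y z : V} {ℓ : V → V}

theorem eq_or_eq_of_not_rainbow (hnr : ¬ HasRainbowTriangle c) (hxy : x ≠ y) (hxz : x ≠ z)
    (hyz : y ≠ z) (h : c x y ≠ c y z) : c x z = c x y ∨ c x z = c y z := by
  by_contra! h'
  exact hnr ⟨x, y, z, hxy, hxz, hyz, h'.1.symm, h, h'.2⟩

theorem eq_or_eq_of_forall_color_eq (hnr : ¬ HasRainbowTriangle c) {d : C} (hzy : z ≠ y)
    (hzS : z ∉ S) (hyS : y ∉ S) (hy : ∀ x ∈ S, c y x = d) (hne : c z y ≠ d) :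
    ∀ x ∈ S, c z x = c z y ∨ c z x = d := by
  intro x hx
  rw [← hy x hx]
  exact eq_or_eq_of_not_rainbow hnr hzy (fun h => hzS (h ▸ hx)) (fun h => hyS (h ▸ hx))
    (hy x hx ▸ hne)

def ColorAdj (c : V → V → C) (s : Finset V) (F : C → Prop) (u v : V) : Prop :=
  u ∈ s ∧ v ∈ s ∧ u ≠ v ∧ F (c u v)

abbrev ColorReach (c : V → V → C) (s : Finset V) (F : C → Prop) : V → V → Prop :=
  Relation.ReflTransGen (ColorAdj c s F)

theorem ColorAdj.symm (hsym : IsSymmColoring c) (h : ColorAdj c s F u v) : ColorAdj c s F v u :=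
  ⟨h.2.1, h.1, h.2.2.1.symm, hsym u v ▸ h.2.2.2⟩

theorem ColorAdj.mono {t : Finset V} (h : ColorAdj c s F u v) (hst : s ⊆ t) :
    ColorAdj c t F u v :=
  ⟨hst h.1, hst h.2.1, h.2.2⟩

theorem ColorReach.symm (hsym : IsSymmColoring c) (h : ColorReach c s F u v) :
    ColorReach c s F v u := by
  induction h with
  | refl => exact .refl
  | tail _ hxy ih => exact .head (hxy.symm hsym) ih

theorem ColorReach.of_closed {Q : V → Prop} (hQ : ∀ x y, ColorAdj c s F x y → Q x → Q y)
    (h : ColorReach c s F u v) (hu : Q u) : Q v := by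
  induction h with
  | refl => exact hu
  | tail _ hxy ih => exact hQ _ _ hxy ih

theorem not_color_of_colorReach (hax : ColorReach c s F a x) (hx : x ∈ s) (hy : y ∈ s)
    (hay : ¬ ColorReach c s F a y) : ¬ F (c x y) := fun hF =>
  hay (hax.tail ⟨hx, hy, fun h => hay (h ▸ hax), hF⟩)

theorem color_eq_of_colorReach (hsym : IsSymmColoring c) (hnr : ¬ HasRainbowTriangle c)
    (hy : y ∈ s) (hay : ¬ ColorReach c s F a y) (hax : ColorReach c s F a x) :
    c y x = c y a := by
  induction hax with
  | refl => rfl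
  | @tail x' x hax' hx'x ih =>
    obtain ⟨hx', hx, hx'x, hF⟩ := hx'x
    have hax : ColorReach c s F a x := hax'.tail ⟨hx', hx, hx'x, hF⟩
    have hyx' : ¬ F (c y x') := hsym x' y ▸ not_color_of_colorReach hax' hx' hy hay
    have hyx : ¬ F (c y x) := hsym x y ▸ not_color_of_colorReach hax hx hy hay
    have hne : y ≠ x' := by rintro rfl; exact hay hax'
    have hne' : y ≠ x := by rintro rfl; exact hay hax
    rcases eq_or_eq_of_not_rainbow hnr hne hne' hx'x (fun h => hyx' (h ▸ hF)) with h | h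
    · exact h.trans ih
    · exact absurd (h ▸ hF) hyx

def IsTwoColored (c : V → V → C) (s : Finset V) (c₁ c₂ : C) : Prop :=
  ∀ x ∈ s, ∀ y ∈ s, x ≠ y → c x y = c₁ ∨ c x y = c₂

/-- A Gallai partition of `s` with colors `c₁`, `c₂`, encoded by a labelling whose fibres are
the parts, so that collapsing a module is just precomposition. -/
structure IsGallaiLabelling (c : V → V → C) (s : Finset V) (ℓ : V → V) (c₁ c₂ : C) : Prop where
  exists_ne : ∃ u ∈ s, ∃ v ∈ s, ℓ u ≠ ℓ v
  color_eq_or_eq : ∀ u ∈ s, ∀ v ∈ s, ℓ u ≠ ℓ v → c u v = c₁ ∨ c u v = c₂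
  color_eq : ∀ u ∈ s, ∀ u' ∈ s, ∀ v ∈ s, ℓ u = ℓ u' → ℓ v ≠ ℓ u → c v u = c v u'

theorem IsTwoColored.isGallaiLabelling_id (h : IsTwoColored c s c₁ c₂) (hs : 1 < #s) :
    IsGallaiLabelling c s id c₁ c₂ where
  exists_ne := one_lt_card.1 hs
  color_eq_or_eq := h
  color_eq _ _ _ _ _ _ huu' _ := congrArg _ huu'

section DecidableEq

variable [DecidableEq V]

def IsModule (c : V → V → C) (s S : Finset V) : Prop :=
  ∀ y ∈ s \ S, ∀ x ∈ S, ∀ x' ∈ S, c y x = c y x'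

def IsPrime (c : V → V → C) (s : Finset V) : Prop :=
  ∀ S ⊆ s, 1 < #S → S ≠ s → ¬ IsModule c s S

theorem isModule_of_forall_eq {f : V → C} (h : ∀ y ∈ s \ S, ∀ x ∈ S, c y x = f y) :
    IsModule c s S :=
  fun y hy x hx x' hx' => (h y hy x hx).trans (h y hy x' hx').symm

theorem isModule_colorComponent [DecidablePred (ColorReach c s F a)] (hsym : IsSymmColoring c)
    (hnr : ¬ HasRainbowTriangle c) : IsModule c s {x ∈ s | ColorReach c s F a x} := by
  refine isModule_of_forall_eq (f := fun y => c y a) fun y hy x hx => ?_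
  simp only [mem_sdiff, mem_filter, not_and] at hy hx
  exact color_eq_of_colorReach hsym hnr hy.1 (hy.2 hy.1) hx.2

theorem IsPrime.colorReach (hsym : IsSymmColoring c) (hnr : ¬ HasRainbowTriangle c)
    (hs : IsPrime c s) {a' : V} (hF : ColorAdj c s F a a') (hx : x ∈ s) :
    ColorReach c s F a x := by
  classical
  by_contra hax
  refine hs {y ∈ s | ColorReach c s F a y} (filter_subset _ s) ?_ ?_
    (isModule_colorComponent hsym hnr)
  · exact one_lt_card.2 ⟨a, mem_filter.2 ⟨hF.1, .refl⟩, a', mem_filter.2 ⟨hF.2.1, .single hF⟩,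
      hF.2.2.1⟩
  · exact fun h => hax ((filter_eq_self.1 h) x hx)

theorem IsPrime.exists_colorAdj (hsym : IsSymmColoring c) (hnr : ¬ HasRainbowTriangle c)
    (hs : IsPrime c s) {a' : V} (hF : ColorAdj c s F a a') (hz : z ∈ s) :
    ∃ t, ColorAdj c s F z t := by
  rcases Relation.ReflTransGen.cases_head ((hs.colorReach hsym hnr hF hz).symm hsym) with
    rfl | ⟨t, ht, -⟩
  exacts [⟨a', hF⟩, ⟨t, ht⟩]

def collapse (S : Finset V) (a x : V) : V := if x ∈ S then a else x

theorem collapse_mem (hx : x ∈ s) : collapse S a x ∈ insert a (s \ S) := by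
  unfold collapse
  split_ifs with hxS
  · exact mem_insert_self a _
  · exact mem_insert_of_mem (mem_sdiff.2 ⟨hx, hxS⟩)

theorem collapse_of_mem (ha : a ∈ S) (hx : x ∈ insert a (s \ S)) : collapse S a x = x := by
  unfold collapse
  split_ifs with hxS
  · rcases mem_insert.1 hx with rfl | hx
    · rfl
    · exact absurd hxS (mem_sdiff.1 hx).2
  · rfl

theorem IsModule.color_collapse (hsym : IsSymmColoring c) (hmod : IsModule c s S) (ha : a ∈ S)
    (hx : x ∈ s) (hy : y ∈ s) (hxy : collapse S a x ≠ collapse S a y) :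
    c x y = c (collapse S a x) (collapse S a y) := by
  by_cases hxS : x ∈ S <;> by_cases hyS : y ∈ S <;>
    simp only [collapse, hxS, hyS, if_true, if_false] at hxy ⊢
  · exact absurd rfl hxy
  · rw [hsym x y, hsym a y]; exact hmod y (mem_sdiff.2 ⟨hy, hyS⟩) x hxS a ha
  · exact hmod x (mem_sdiff.2 ⟨hx, hxS⟩) y hyS a ha

theorem IsGallaiLabelling.of_collapse (hsym : IsSymmColoring c) (hSs : S ⊆ s) (ha : a ∈ S)
    (hmod : IsModule c s S) (hℓ : IsGallaiLabelling c (insert a (s \ S)) ℓ c₁ c₂) :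
    IsGallaiLabelling c s (ℓ ∘ collapse S a) c₁ c₂ where
  exists_ne := by
    obtain ⟨u, hu, v, hv, huv⟩ := hℓ.exists_ne
    have hsub : insert a (s \ S) ⊆ s := insert_subset (hSs ha) sdiff_subset
    refine ⟨u, hsub hu, v, hsub hv, ?_⟩
    simpa only [Function.comp, collapse_of_mem ha hu, collapse_of_mem ha hv] using huv
  color_eq_or_eq u hu v hv huv := by
    rw [hmod.color_collapse hsym ha hu hv fun h => huv (congrArg ℓ h)]
    exact hℓ.color_eq_or_eq _ (collapse_mem hu) _ (collapse_mem hv) huv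
  color_eq u hu u' hu' v hv huu' hvu := by
    have hvu' : ℓ (collapse S a v) ≠ ℓ (collapse S a u') := fun h => hvu (h.trans huu'.symm)
    rw [hmod.color_collapse hsym ha hv hu fun h => hvu (congrArg ℓ h),
      hmod.color_collapse hsym ha hv hu' fun h => hvu' (congrArg ℓ h)]
    exact hℓ.color_eq _ (collapse_mem hu) _ (collapse_mem hu') _ (collapse_mem hv) huu' hvu

theorem IsModule.of_erase (hmod : IsModule c (s.erase z) S)
    (hz : ∀ x ∈ S, ∀ x' ∈ S, c z x = c z x') : IsModule c s S := by
  intro y hy x hx x' hx'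
  obtain rfl | hyz := eq_or_ne y z
  · exact hz x hx x' hx'
  · exact hmod y (mem_sdiff.2 ⟨mem_erase.2 ⟨hyz, (mem_sdiff.1 hy).1⟩, (mem_sdiff.1 hy).2⟩)
      x hx x' hx'

theorem IsModule.insert_of_erase (hsym : IsSymmColoring c) (hmod : IsModule c (s.erase z) S)
    (hu : u ∈ S) (hz : ∀ y ∈ s.erase z \ S, c z y = c y u) : IsModule c s (insert z S) := by
  refine isModule_of_forall_eq (f := fun y => c y u) fun y hy x hx => ?_
  simp only [mem_sdiff, mem_insert, not_or] at hy
  have hy' : y ∈ s.erase z \ S := mem_sdiff.2 ⟨mem_erase.2 ⟨hy.2.1, hy.1⟩, hy.2.2⟩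
  rcases mem_insert.1 hx with rfl | hx
  · rw [hsym]; exact hz y hy'
  · exact hmod y hy' x hx u hu

theorem exists_isTwoColored_of_card_eq_two (hs : #s = 2) : ∃ c₁ c₂, IsTwoColored c s c₁ c₂ := by
  obtain ⟨x, y, -, rfl⟩ := card_eq_two.1 hs
  refine ⟨c x y, c y x, ?_⟩
  simp only [IsTwoColored, mem_insert, mem_singleton]
  rintro u (rfl | rfl) v (rfl | rfl) huv <;> simp_all

theorem IsTwoColored.isModule_insert_filter [DecidableEq C] (hsym : IsSymmColoring c)
    (hnr : ¬ HasRainbowTriangle c) (h : IsTwoColored c (s.erase z) c₁ c₂) (hγ₁ : γ ≠ c₁)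
    (hγ₂ : γ ≠ c₂) : IsModule c s (insert z {x ∈ s.erase z | c z x = γ}) := by
  refine isModule_of_forall_eq (f := fun y => c y z) fun y hy m hm => ?_
  simp only [mem_sdiff, mem_insert, mem_filter, mem_erase, not_or, not_and] at hy hm
  obtain ⟨hys, hyz, hyγ⟩ := hy
  replace hyγ : c z y ≠ γ := hyγ ⟨hyz, hys⟩
  rcases hm with rfl | ⟨⟨hmz, hms⟩, hmγ⟩
  · rfl
  have hym : y ≠ m := by rintro rfl; exact hyγ hmγ
  have hmy : c z m ≠ c m y := by
    rw [hmγ]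
    rcases h m (mem_erase.2 ⟨hmz, hms⟩) y (mem_erase.2 ⟨hyz, hys⟩) hym.symm with h' | h'
    exacts [fun e => hγ₁ (e.trans h'), fun e => hγ₂ (e.trans h')]
  rcases eq_or_eq_of_not_rainbow hnr (Ne.symm hmz) (Ne.symm hyz) (Ne.symm hym) hmy with h' | h'
  · exact absurd (h'.trans hmγ) hyγ
  · rw [hsym y m, ← h', hsym]

theorem IsPrime.isTwoColored_of_erase (hsym : IsSymmColoring c) (hnr : ¬ HasRainbowTriangle c)
    (hs : IsPrime c s) (hz : z ∈ s) (h3 : 3 ≤ #s) (h : IsTwoColored c (s.erase z) c₁ c₂) :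
    IsTwoColored c s c₁ c₂ := by
  classical
  by_contra hne
  obtain ⟨t, ht, htc₁, htc₂⟩ : ∃ t ∈ s.erase z, c z t ≠ c₁ ∧ c z t ≠ c₂ := by
    simp only [IsTwoColored, not_forall, not_or] at hne
    obtain ⟨x, hx, y, hy, hxy, hcol⟩ := hne
    obtain rfl | hxz := eq_or_ne x z
    · exact ⟨y, mem_erase.2 ⟨hxy.symm, hy⟩, hcol⟩
    obtain rfl | hyz := eq_or_ne y z
    · exact ⟨x, mem_erase.2 ⟨hxz, hx⟩, hsym x y ▸ hcol⟩
    rcases h x (mem_erase.2 ⟨hxz, hx⟩) y (mem_erase.2 ⟨hyz, hy⟩) hxy with e | e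
    exacts [absurd e hcol.1, absurd e hcol.2]
  have hM : insert z {x ∈ s.erase z | c z x = c z t} = s := by
    by_contra hM
    refine hs _ (insert_subset hz ((filter_subset _ _).trans (erase_subset z s))) ?_ hM
      (h.isModule_insert_filter hsym hnr htc₁ htc₂)
    exact one_lt_card.2 ⟨z, mem_insert_self _ _, t, mem_insert_of_mem (mem_filter.2 ⟨ht, rfl⟩),
      fun e => (mem_erase.1 ht).1 e.symm⟩
  have hzt : ∀ x ∈ s.erase z, c z x = c z t := by
    intro x hx
    rcases mem_insert.1 (hM ▸ mem_of_mem_erase hx) with rfl | hxM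
    · exact absurd hx (notMem_erase x s)
    · exact (mem_filter.1 hxM).2
  refine hs (s.erase z) (erase_subset z s) (by rw [card_erase_of_mem hz]; omega)
    (erase_ssubset hz).ne (isModule_of_forall_eq (f := fun _ => c z t) fun y hy x hx => ?_)
  rw [sdiff_erase_self hz, mem_singleton] at hy
  subst hy
  exact hzt x hx

/-- The vertices of `s - z` outside `S` violating the conclusion form a set that is closed
under `γ`-edges (an edge leaving it would close a rainbow triangle) and misses `S`. -/
theorem IsModule.color_mem_of_colorReach (hsym : IsSymmColoring c) (hnr : ¬ HasRainbowTriangle c)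
    {P : C → Prop} (hmod : IsModule c (s.erase z) S) (hu : u ∈ S)
    (hγ : ∀ y ∈ s.erase z \ S, c y u ≠ γ)
    (hconn : ∀ y ∈ s, ColorReach c s (· = γ) y u)
    (hz : ∀ y ∈ s.erase z \ S, ¬ P (c y u) → c z y = c y u) :
    ∀ y ∈ s.erase z \ S, P (c y u) := by
  intro y hy
  by_contra hPy
  have hclosed : ∀ x x', ColorAdj c s (· = γ) x x' → x ∈ s.erase z \ S ∧ ¬ P (c x u) →
      x' ∈ s.erase z \ S ∧ ¬ P (c x' u) := by
    rintro x x' ⟨-, hx's, hxx', hγxx'⟩ ⟨hx, hPx⟩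
    have hx'z : x' ≠ z := by
      rintro rfl
      exact hγ x hx (by rw [← hz x hx hPx, hsym, hγxx'])
    have hx'S : x' ∉ S := fun h => hγ x hx (by rw [← hmod x hx x' h u hu, hγxx'])
    have hx' : x' ∈ s.erase z \ S := mem_sdiff.2 ⟨mem_erase.2 ⟨hx'z, hx's⟩, hx'S⟩
    refine ⟨hx', fun hPx' => hnr ⟨x, x', u, hxx', ?_, ?_, ?_, ?_, ?_⟩⟩
    · rintro rfl; exact (mem_sdiff.1 hx).2 hu
    · rintro rfl; exact hx'S hu
    · rw [hγxx']; exact (hγ x hx).symm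
    · rw [hγxx']; exact (hγ x' hx').symm
    · exact fun h => hPx (h ▸ hPx')
  have hys : y ∈ s := mem_of_mem_erase (mem_sdiff.1 hy).1
  exact (mem_sdiff.1 ((hconn y hys).of_closed hclosed ⟨hy, hPy⟩).1).2 hu

theorem IsPrime.exists_colors_of_erase (hsym : IsSymmColoring c) (hnr : ¬ HasRainbowTriangle c)
    (hs : IsPrime c s) (hz : z ∈ s) (hSs : S ⊆ s.erase z) (hS2 : 1 < #S) (hu : u ∈ S)
    (hw : w ∈ s.erase z \ S) (hmod : IsModule c (s.erase z) S) :
    ∃ p q : C, (∀ x ∈ S, c z x = p ∨ c z x = q) ∧ ∀ y ∈ s.erase z \ S, c z y ≠ c y u →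
      (c z y = p ∨ c z y = q) ∧ (c y u = p ∨ c y u = q) := by
  have hzS : z ∉ S := fun h => by simpa using hSs h
  have hzy : ∀ y ∈ s.erase z \ S, z ≠ y := fun y hy h => by simp [← h] at hy
  have hsees (y) (hy : y ∈ s.erase z \ S) (hne : c z y ≠ c y u) :
      ∀ x ∈ S, c z x = c z y ∨ c z x = c y u :=
    eq_or_eq_of_forall_color_eq hnr (hzy y hy) hzS (mem_sdiff.1 hy).2
      (fun x hx => hmod y hy x hx u hu) hne
  obtain ⟨x₁, hx₁, hzx₁⟩ : ∃ x₁ ∈ S, c z x₁ ≠ c z u := by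
    by_contra! h
    exact hs S (hSs.trans (erase_subset z s)) hS2 (fun h' => hzS (h' ▸ hz))
      (hmod.of_erase fun x hx x' hx' => (h x hx).trans (h x' hx').symm)
  have hpair : ∀ y ∈ s.erase z \ S, c z y ≠ c y u →
      (c z y = c z u ∨ c z y = c z x₁) ∧ (c y u = c z u ∨ c y u = c z x₁) := by
    intro y hy hne
    have := hsees y hy hne u hu
    have := hsees y hy hne x₁ hx₁
    grind
  obtain ⟨y₀, hy₀, hy₀u⟩ : ∃ y ∈ s.erase z \ S, c z y ≠ c y u := by
    by_contra! h
    refine hs (insert z S) (insert_subset hz (hSs.trans (erase_subset z s)))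
      (hS2.trans_le (card_le_card (subset_insert z S))) ?_ (hmod.insert_of_erase hsym hu h)
    rintro hzSs
    simp only [mem_sdiff, mem_erase] at hw
    exact hw.2 (mem_of_mem_insert_of_ne (hzSs ▸ hw.1.2) hw.1.1)
  refine ⟨c z u, c z x₁, fun x hx => ?_, hpair⟩
  rcases hsees y₀ hy₀ hy₀u x hx with h | h <;> rw [h]
  exacts [(hpair y₀ hy₀ hy₀u).1, (hpair y₀ hy₀ hy₀u).2]

theorem IsPrime.exists_isTwoColored_of_erase (hsym : IsSymmColoring c)
    (hnr : ¬ HasRainbowTriangle c) (hs : IsPrime c s) (hz : z ∈ s) (hSs : S ⊆ s.erase z)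
    (huv : ColorAdj c S (· = γ) u v) (hw : w ∈ s.erase z \ S) (hmod : IsModule c (s.erase z) S)
    (hγ : ∀ y ∈ s.erase z \ S, c y u ≠ γ) : ∃ c₁ c₂, IsTwoColored c s c₁ c₂ := by
  obtain ⟨p, q, hzS, hpair⟩ := hs.exists_colors_of_erase hsym hnr hz hSs
    (one_lt_card.2 ⟨u, huv.1, v, huv.2.1, huv.2.2.1⟩) huv.1 hw hmod
  have hγuv : ColorAdj c s (· = γ) u v := huv.mono (hSs.trans (erase_subset z s))
  have hcolors := hmod.color_mem_of_colorReach hsym hnr (P := fun d => d = p ∨ d = q)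
    huv.1 hγ (fun y hy => (hs.colorReach hsym hnr hγuv hy).symm hsym)
    (fun y hy hP => by_contra fun h => hP (hpair y hy h).2)
  refine ⟨p, q, ?_⟩
  by_contra hne
  simp only [IsTwoColored, not_forall] at hne
  obtain ⟨x, hx, y, hy, hxy, hcol⟩ := hne
  obtain ⟨t, -, ht, hzt, hcolt⟩ :=
    hs.exists_colorAdj hsym hnr (F := fun d => ¬ (d = p ∨ d = q)) ⟨hx, hy, hxy, hcol⟩ hz
  have ht' : t ∈ s.erase z \ S :=
    mem_sdiff.2 ⟨mem_erase.2 ⟨hzt.symm, ht⟩, fun h => hcolt (hzS t h)⟩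
  by_cases h : c z t = c t u
  · exact hcolt (by rw [h]; exact hcolors t ht')
  · exact hcolt (hpair t ht' h).1

theorem IsPrime.exists_isTwoColored (hsym : IsSymmColoring c) (hnr : ¬ HasRainbowTriangle c)
    (hs : IsPrime c s) (hs1 : 1 < #s)
    (ih : ∀ t ⊂ s, 1 < #t → ∃ (ℓ : V → V) (c₁ c₂ : C), IsGallaiLabelling c t ℓ c₁ c₂) :
    ∃ c₁ c₂, IsTwoColored c s c₁ c₂ := by
  classical
  obtain hs2 | hs3 : #s = 2 ∨ 3 ≤ #s := by omega
  · exact exists_isTwoColored_of_card_eq_two hs2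
  obtain ⟨z, hz⟩ : s.Nonempty := card_pos.1 (by omega)
  obtain ⟨ℓ, c₁, c₂, hℓ⟩ :=
    ih (s.erase z) (erase_ssubset hz) (by rw [card_erase_of_mem hz]; omega)
  by_cases htwo : IsTwoColored c (s.erase z) c₁ c₂
  · exact ⟨c₁, c₂, hs.isTwoColored_of_erase hsym hnr hz hs3 htwo⟩
  simp only [IsTwoColored, not_forall, not_or] at htwo
  obtain ⟨u, hu, v, hv, huv, hcol⟩ := htwo
  have hclass : ∀ x, ColorReach c (s.erase z) (· = c u v) u x → ℓ x = ℓ u := by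
    refine fun x hx => hx.of_closed (Q := fun x => ℓ x = ℓ u) (fun x y hxy hxu => ?_) rfl
    obtain ⟨hx, hy, hxy, hγ⟩ := hxy
    by_contra hyu
    rcases hℓ.color_eq_or_eq x hx y hy (hxu ▸ Ne.symm hyu) with h | h
    exacts [hcol.1 (hγ ▸ h), hcol.2 (hγ ▸ h)]
  obtain ⟨w, hw, hℓw⟩ : ∃ w ∈ s.erase z, ℓ w ≠ ℓ u := by
    obtain ⟨a, ha, b, hb, hab⟩ := hℓ.exists_ne
    by_cases hau : ℓ a = ℓ u
    exacts [⟨b, hb, hau ▸ Ne.symm hab⟩, ⟨a, ha, hau⟩]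
  refine hs.exists_isTwoColored_of_erase hsym hnr hz (filter_subset _ _)
    ⟨mem_filter.2 ⟨hu, .refl⟩, mem_filter.2 ⟨hv, .single ⟨hu, hv, huv, rfl⟩⟩, huv, rfl⟩
    (mem_sdiff.2 ⟨hw, fun h => hℓw (hclass w (mem_filter.1 h).2)⟩)
    (isModule_colorComponent hsym hnr) fun y hy h => ?_
  simp only [mem_sdiff, mem_filter, not_and] at hy
  exact not_color_of_colorReach .refl hu hy.1 (hy.2 hy.1) ((hsym u y).trans h)

theorem exists_isGallaiLabelling (hsym : IsSymmColoring c) (hnr : ¬ HasRainbowTriangle c)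
    (s : Finset V) (hs : 1 < #s) : ∃ (ℓ : V → V) (c₁ c₂ : C), IsGallaiLabelling c s ℓ c₁ c₂ := by
  induction s using Finset.strongInduction with
  | H s ih =>
  by_cases hprime : IsPrime c s
  · obtain ⟨c₁, c₂, h⟩ := hprime.exists_isTwoColored hsym hnr hs ih
    exact ⟨id, c₁, c₂, h.isGallaiLabelling_id hs⟩
  simp only [IsPrime, not_forall, not_not] at hprime
  obtain ⟨S, hSs, hS, hSs', hmod⟩ := hprime
  obtain ⟨a, ha, b, hb, hab⟩ := one_lt_card.1 hS
  obtain ⟨y, hy, hyS⟩ := exists_of_ssubset (hSs.ssubset_of_ne hSs')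
  have hsub : insert a (s \ S) ⊂ s := (ssubset_iff_of_subset
    (insert_subset (hSs ha) sdiff_subset)).2 ⟨b, hSs hb, by simp [hb, Ne.symm hab]⟩
  have hcard : 1 < #(insert a (s \ S)) := one_lt_card.2 ⟨a, mem_insert_self _ _, y,
    mem_insert_of_mem (mem_sdiff.2 ⟨hy, hyS⟩), fun h => hyS (h ▸ ha)⟩
  obtain ⟨ℓ, c₁, c₂, hℓ⟩ := ih _ hsub hcard
  exact ⟨_, c₁, c₂, hℓ.of_collapse hsym hSs ha hmod⟩

theorem IsGallaiLabelling.exists_finpartition (hsym : IsSymmColoring c)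
    (hℓ : IsGallaiLabelling c s ℓ c₁ c₂) :
    ∃ P : Finpartition s, 2 ≤ #P.parts ∧ ∀ p ∈ P.parts, ∀ q ∈ P.parts, p ≠ q →
      ∃ col : C, (col = c₁ ∨ col = c₂) ∧ ∀ u ∈ p, ∀ v ∈ q, c u v = col := by
  classical
  refine ⟨Finpartition.ofSetSetoid (Setoid.ker ℓ) s, ?_, ?_⟩
  · obtain ⟨u, hu, v, hv, huv⟩ := hℓ.exists_ne
    simp only [Finpartition.ofSetSetoid_parts]
    refine one_lt_card.2 ⟨_, mem_image_of_mem _ hu, _, mem_image_of_mem _ hv, fun h => huv ?_⟩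
    have hu' : u ∈ {b ∈ s | (Setoid.ker ℓ) v b} := h ▸ mem_filter.2 ⟨hu, Setoid.ker_def.2 rfl⟩
    exact (Setoid.ker_def.1 (mem_filter.1 hu').2).symm
  · simp only [Finpartition.ofSetSetoid_parts, mem_image]
    rintro _ ⟨a, ha, rfl⟩ _ ⟨b, hb, rfl⟩ hpq
    have hab : ℓ a ≠ ℓ b := fun h => hpq (by ext x; simp [Setoid.ker_def, h])
    refine ⟨c a b, hℓ.color_eq_or_eq a ha b hb hab, ?_⟩
    simp only [mem_filter, Setoid.ker_def]
    rintro u ⟨hu, hau⟩ v ⟨hv, hbv⟩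
    rw [hℓ.color_eq v hv b hb u hu hbv.symm (by rw [← hau, ← hbv]; exact hab), hsym u b,
      hℓ.color_eq u hu a ha b hb hau.symm (by rw [← hau]; exact hab.symm), hsym]

end DecidableEq

end Gallai

/-- Gallai's theorem: any rainbow-triangle-free edge coloring of a complete graph
on at least two vertices admits a nontrivial Gallai partition. -/
theorem stmt_0 {V C : Type*} [Fintype V] [DecidableEq V]
    (h2 : 2 ≤ Fintype.card V) (c : V → V → C) (hsym : IsSymmColoring c)
    (hnr : ¬ HasRainbowTriangle c) :
    ∃ P : Finpartition (univ : Finset V), 2 ≤ P.parts.card ∧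
      ∃ c1 c2 : C, ∀ p ∈ P.parts, ∀ q ∈ P.parts, p ≠ q →
        ∃ col : C, (col = c1 ∨ col = c2) ∧ ∀ u ∈ p, ∀ v ∈ q, c u v = col := by
  obtain ⟨ℓ, c₁, c₂, hℓ⟩ := Gallai.exists_isGallaiLabelling hsym hnr univ (by rwa [card_univ])
  obtain ⟨P, hP, hcol⟩ := hℓ.exists_finpartition hsym
  exact ⟨P, hP, c₁, c₂, hcol⟩
end

section
/- For all integers n ≥ m ≥ 1 with n even, there exists a 3-edge-coloring of the complete graph on 5n/2 vertices that contains no rainbow triangle and no monochromatic copy of the double star S(n,m). -/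
open Finset

/-!
Blow up the 2-coloring of `K₅` whose color classes are the pentagon and the pentagram into
five blocks of `n / 2` vertices each, using a third color inside the blocks. A rainbow triangle
would have its corners in three distinct blocks and hence be a rainbow triangle of the
2-colored `K₅`, which has none. Every vertex has at most `2 * (n / 2) ≤ n` neighbours in each
color, whereas a monochromatic `S(n,m)` gives its center `n + 1` neighbours in one color.
-/

section BlowUp

variable {V α C : Type*}

theorem IsSymmColoring.comp {c : α → α → C} (hc : IsSymmColoring c) (f : V → α) :
    IsSymmColoring fun x y => c (f x) (f y) :=
  fun x y => hc (f x) (f y)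

theorem not_hasRainbowTriangle_comp {c : α → α → C} (hc : IsSymmColoring c)
    (h : ¬ HasRainbowTriangle c) (f : V → α) :
    ¬ HasRainbowTriangle fun x y => c (f x) (f y) := by
  rintro ⟨u, v, w, -, -, -, huv_uw, huv_vw, huw_vw⟩
  dsimp only at huv_uw huv_vw huw_vw
  have hfuv : f u ≠ f v := fun he => huw_vw (by rw [he])
  have hfuw : f u ≠ f w := fun he => huv_vw (by rw [he, hc])
  have hfvw : f v ≠ f w := fun he => huv_uw (by rw [he])
  exact h ⟨f u, f v, f w, hfuv, hfuw, hfvw, huv_uw, huv_vw, huw_vw⟩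

end BlowUp

section ColorDegree

variable {V α C : Type*} [Fintype V] [DecidableEq V] [DecidableEq C]

def colorNeighborFinset (c : V → V → C) (u : V) (col : C) : Finset V :=
  {x | x ≠ u ∧ c u x = col}

theorem not_hasMonoDoubleStar_of_card_colorNeighborFinset_le {c : V → V → C} {n : ℕ}
    (h : ∀ u col, #(colorNeighborFinset c u col) ≤ n) (m : ℕ) :
    ¬ HasMonoDoubleStar c n m := by
  rintro ⟨u, v, A, -, col, huv, hA, -, -, huA, -, hvA, -, hcuv, hAcol, -⟩
  have hsub : insert v A ⊆ colorNeighborFinset c u col := by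
    intro x hx
    simp only [colorNeighborFinset, mem_filter, mem_univ, true_and]
    rcases mem_insert.mp hx with rfl | hx
    · exact ⟨huv.symm, hcuv⟩
    · exact ⟨fun hxu => huA (hxu ▸ hx), hAcol x hx⟩
  have := (card_le_card hsub).trans (h u col)
  rw [card_insert_of_notMem hvA, hA] at this
  omega

theorem card_colorNeighborFinset_comp_le [Fintype α] [DecidableEq α] {c : α → α → C}
    {f : V → α} {K : ℕ} (hf : ∀ a, #{x | f x = a} ≤ K) (u : V) (col : C) :
    #(colorNeighborFinset (fun x y => c (f x) (f y)) u col) ≤ K * #{b | c (f u) b = col} := by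
  refine card_le_mul_card_image_of_maps_to (f := f) ?_ K fun b _ => ?_
  · intro x hx
    simp only [colorNeighborFinset, mem_filter, mem_univ, true_and] at hx ⊢
    exact hx.2
  · exact (card_le_card (filter_subset_filter _ (subset_univ _))).trans (hf b)

end ColorDegree

theorem card_filter_fst_equiv_symm_eq_le {V α β : Type*} [Fintype V] [Fintype β]
    [DecidableEq α] (e : α × β ≃ V) (a : α) :
    #{x | (e.symm x).1 = a} ≤ Fintype.card β := by
  refine card_le_card_of_injOn (fun x => (e.symm x).2) (fun _ _ => mem_univ _) ?_
  intro x hx y hy hxy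
  simp only [coe_filter, mem_univ, true_and, Set.mem_ofPred_eq] at hx hy
  exact e.symm.injective (Prod.ext (hx.trans hy.symm) hxy)

/-- The diagonal value `2` becomes the color inside the blocks of the blow-up. -/
def pentagonColoring (a b : Fin 5) : Fin 3 :=
  if a = b then 2 else if b = a + 1 ∨ a = b + 1 then 0 else 1

theorem isSymmColoring_pentagonColoring : IsSymmColoring pentagonColoring := by
  unfold IsSymmColoring; decide

theorem not_hasRainbowTriangle_pentagonColoring : ¬ HasRainbowTriangle pentagonColoring := by
  unfold HasRainbowTriangle; decide

theorem card_filter_pentagonColoring_le (a : Fin 5) (col : Fin 3) :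
    #{b | pentagonColoring a b = col} ≤ 2 := by
  revert a col; decide

theorem stmt_1_general (n m : ℕ) :
    grAvoid 3 n m (5 * (n / 2)) := by
  let e : Fin 5 × Fin (n / 2) ≃ Fin (5 * (n / 2)) := finProdFinEquiv
  let f : Fin (5 * (n / 2)) → Fin 5 := fun x => (e.symm x).1
  refine ⟨fun x y => pentagonColoring (f x) (f y), isSymmColoring_pentagonColoring.comp f,
    not_hasRainbowTriangle_comp isSymmColoring_pentagonColoring
      not_hasRainbowTriangle_pentagonColoring f, ?_⟩
  refine not_hasMonoDoubleStar_of_card_colorNeighborFinset_le (fun u col => ?_) m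
  have hf (a : Fin 5) : #{x | f x = a} ≤ n / 2 := by
    simpa using card_filter_fst_equiv_symm_eq_le e a
  calc #(colorNeighborFinset _ u col)
      ≤ n / 2 * #{b | pentagonColoring (f u) b = col} := card_colorNeighborFinset_comp_le hf u col
    _ ≤ n / 2 * 2 := Nat.mul_le_mul_left _ (card_filter_pentagonColoring_le _ _)
    _ ≤ n := Nat.div_mul_le_self n 2

/-- For n ≥ m ≥ 1, n even: a rainbow-triangle-free 3-coloring of `K_{5n/2}`
with no monochromatic `S(n,m)`. -/
theorem stmt_1 (n m : ℕ) (hm : 1 ≤ m) (hmn : m ≤ n) (hn : Even n) :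
    grAvoid 3 n m (5 * (n / 2)) :=
  stmt_1_general n m
end

section
/- For all integers n ≥ m ≥ 1 with n odd, there exists a 3-edge-coloring of the complete graph on 5(n-1)/2 + 1 vertices that contains no rainbow triangle and no monochromatic copy of the double star S(n,m). -/
open Finset

/-!
Blow up the 5-cycle: split the vertices into the five residue classes mod 5, colour an edge
inside a class with colour 2, and an edge between classes with colour 0 or 1 according as the
classes are adjacent on the pentagon or on the pentagram. Every triangle meets at most two of
the three colours, because an edge inside a class forces its two endpoints to see the third
vertex in the same colour. Each vertex sees at most two classes in any one colour, and
`5t + 1` vertices split into classes of size `t + 1, t, t, t, t`, so every monochromatic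
degree is at most `2t + 1 = n`, whereas a centre of `S(n,m)` needs `n + 1` neighbours.
-/

lemma not_hasRainbowTriangle_comp_s2 {V W C : Type*} (d : W → W → C)
    (hd : ∀ i j k, d i j = d i k ∨ d i j = d j k ∨ d i k = d j k) (f : V → W) :
    ¬ HasRainbowTriangle fun x y => d (f x) (f y) := by
  rintro ⟨u, v, w, -, -, -, h₁, h₂, h₃⟩
  rcases hd (f u) (f v) (f w) with h | h | h <;> contradiction

lemma not_hasMonoDoubleStar_of_card_le {V C : Type*} [Fintype V] [DecidableEq V]
    [DecidableEq C] (c : V → V → C) (n m : ℕ) (h : ∀ u col, #{x | c u x = col} ≤ n) :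
    ¬ HasMonoDoubleStar c n m := by
  rintro ⟨u, v, A, -, col, -, hA, -, -, -, -, hvA, -, huv, hAcol, -⟩
  have hsub : insert v A ⊆ ({x | c u x = col} : Finset V) := by
    intro x hx
    rcases mem_insert.1 hx with rfl | hx
    · simpa using huv
    · simpa using hAcol x hx
  have := (card_le_card hsub).trans (h u col)
  rw [card_insert_of_notMem hvA, hA] at this
  omega

lemma card_filter_natCast_eq_le (k t : ℕ) [NeZero k] (r : ZMod k) :
    #{x : Fin (k * t + 1) | ((x : ℕ) : ZMod k) = r} ≤ t + if r = 0 then 1 else 0 := by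
  have hmod : ∀ x : ℕ, (x : ZMod k) = r → x % k = r.val := fun x hx => by
    rw [← hx, ZMod.val_natCast]
  refine (card_le_card_of_injOn (fun x : Fin (k * t + 1) => (x : ℕ) / k)
    (t := range (t + if r = 0 then 1 else 0)) (fun x hx => ?_) (fun x hx y hy hxy => ?_)).trans
    (card_range _).le
  · have hx := hmod x (mem_filter.1 hx).2
    have hxlt := x.isLt
    rw [mem_coe, mem_range]
    split_ifs with hr
    · exact Nat.lt_succ_of_le (Nat.div_le_of_le_mul (by omega))
    · have : (x : ℕ) ≠ k * t := fun h => hr (by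
        rw [← ZMod.val_eq_zero, ← hx, h, Nat.mul_mod_right])
      rw [add_zero]
      exact Nat.div_lt_of_lt_mul (by omega)
  · apply Fin.ext
    rw [← Nat.div_add_mod (x : ℕ) k, ← Nat.div_add_mod (y : ℕ) k, hmod x (mem_filter.1 hx).2,
      hmod y (mem_filter.1 hy).2]
    simp_all

lemma card_filter_natCast_mem_le (k t : ℕ) [NeZero k] (R : Finset (ZMod k)) :
    #{x : Fin (k * t + 1) | ((x : ℕ) : ZMod k) ∈ R} ≤ t * #R + 1 := by
  rw [card_eq_sum_card_fiberwise (s := {x : Fin (k * t + 1) | ((x : ℕ) : ZMod k) ∈ R})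
    (f := fun x : Fin (k * t + 1) => ((x : ℕ) : ZMod k)) (t := R) (fun x hx => by simpa using hx)]
  calc _ ≤ ∑ r ∈ R, (t + if r = 0 then 1 else 0) := sum_le_sum fun r _ =>
        (card_le_card (filter_subset_filter _ (subset_univ _))).trans
          (card_filter_natCast_eq_le k t r)
    _ ≤ t * #R + 1 := by
        rw [sum_add_distrib, sum_const, smul_eq_mul, mul_comm, sum_ite_eq']
        split_ifs <;> omega

def pentagonColor (i j : ZMod 5) : Fin 3 :=
  if i = j then 2 else if i - j = 1 ∨ j - i = 1 then 0 else 1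

lemma pentagonColor_comm (i j : ZMod 5) : pentagonColor i j = pentagonColor j i := by
  revert i j; decide

lemma pentagonColor_not_rainbow (i j k : ZMod 5) :
    pentagonColor i j = pentagonColor i k ∨ pentagonColor i j = pentagonColor j k ∨
      pentagonColor i k = pentagonColor j k := by
  revert i j k; decide

lemma card_filter_pentagonColor_eq_le (i : ZMod 5) (col : Fin 3) :
    #{j | pentagonColor i j = col} ≤ 2 := by
  revert i col; decide

theorem stmt_2_general (n m : ℕ) (hn : Odd n) :
    grAvoid 3 n m (5 * ((n - 1) / 2) + 1) := by
  obtain ⟨t, rfl⟩ := hn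
  rw [show (2 * t + 1 - 1) / 2 = t by omega]
  let f : Fin (5 * t + 1) → ZMod 5 := fun x => ((x : ℕ) : ZMod 5)
  refine ⟨fun x y => pentagonColor (f x) (f y), fun x y => pentagonColor_comm _ _,
    not_hasRainbowTriangle_comp_s2 _ pentagonColor_not_rainbow f,
    not_hasMonoDoubleStar_of_card_le _ _ _ fun u col => ?_⟩
  calc #{x | pentagonColor (f u) (f x) = col}
      = #{x | f x ∈ ({j | pentagonColor (f u) j = col} : Finset (ZMod 5))} := by simp
    _ ≤ t * 2 + 1 := (card_filter_natCast_mem_le 5 t _).trans (by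
        gcongr; exact card_filter_pentagonColor_eq_le _ _)
    _ = 2 * t + 1 := by ring

/-- For n ≥ m ≥ 1, n odd: a rainbow-triangle-free 3-coloring of `K_{5(n-1)/2 + 1}`
with no monochromatic `S(n,m)`. -/
theorem stmt_2 (n m : ℕ) (hm : 1 ≤ m) (hmn : m ≤ n) (hn : Odd n) :
    grAvoid 3 n m (5 * ((n - 1) / 2) + 1) :=
  stmt_2_general n m hn
end

section
/- For all integers k ≥ 4 and n ≥ m ≥ 1 with n even, there exists a k-edge-coloring of the complete graph on 5n/2 + m(k-3) vertices containing no rainbow triangle and no monochromatic copy of the double star S(n,m). -/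
open Finset

namespace Stmt3Aux

def gfun (a b : ℕ) : ℕ :=
  if (a + 5 - b) % 5 = 0 then 2
  else if (a + 5 - b) % 5 = 1 ∨ (a + 5 - b) % 5 = 4 then 0
  else 1

def lvlf (t m x : ℕ) : ℕ := if x < 5 * t then 0 else (x - 5 * t) / m + 1

def cNat (t m x y : ℕ) : ℕ :=
  if lvlf t m x < lvlf t m y then lvlf t m y + 2
  else if lvlf t m y < lvlf t m x then lvlf t m x + 2
  else if lvlf t m x = 0 then gfun (x / t) (y / t)
  else 0

lemma gfun_le (a b : ℕ) : gfun a b ≤ 2 := by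
  unfold gfun
  split
  · omega
  · split <;> omega

lemma gfun_symm : ∀ a < 5, ∀ b < 5, gfun a b = gfun b a := by decide

lemma gfun_tri : ∀ a < 5, ∀ b < 5, ∀ c < 5,
    gfun a b = gfun a c ∨ gfun a b = gfun b c ∨ gfun a c = gfun b c := by decide

lemma gfun_eq0 : ∀ a < 5, ∀ b < 5, gfun a b = 0 → b = (a+1) % 5 ∨ b = (a+4) % 5 := by decide
lemma gfun_eq1 : ∀ a < 5, ∀ b < 5, gfun a b = 1 → b = (a+2) % 5 ∨ b = (a+3) % 5 := by decide
lemma gfun_eq2 : ∀ a < 5, ∀ b < 5, gfun a b = 2 → b = a := by decide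

lemma lvlf_zero_iff {t m x : ℕ} : lvlf t m x = 0 ↔ x < 5 * t := by
  unfold lvlf
  split <;> simp_all

lemma div_lt5 {t x : ℕ} (hx : x < 5 * t) : x / t < 5 :=
  Nat.div_lt_of_lt_mul (by omega)

lemma lvlf_le {t m k x : ℕ} (hm : 1 ≤ m) (hx : x < 5 * t + m * (k - 3)) :
    lvlf t m x ≤ k - 3 := by
  unfold lvlf
  split
  · omega
  · have h1 : x - 5 * t < m * (k - 3) := by omega
    have h2 : (x - 5 * t) / m < k - 3 := Nat.div_lt_of_lt_mul h1
    omega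

lemma cNat_lt {t m k x y : ℕ} (hm : 1 ≤ m) (hk : 4 ≤ k)
    (hx : x < 5 * t + m * (k - 3)) (hy : y < 5 * t + m * (k - 3)) :
    cNat t m x y < k := by
  have h1 := lvlf_le (t := t) hm hx
  have h2 := lvlf_le (t := t) hm hy
  have h3 := gfun_le (x / t) (y / t)
  unfold cNat
  split
  · omega
  · split
    · omega
    · split <;> omega

lemma cNat_eq_max {t m x y : ℕ} (h : lvlf t m x ≠ lvlf t m y) :
    cNat t m x y = max (lvlf t m x) (lvlf t m y) + 2 := by
  unfold cNat
  rcases Nat.lt_trichotomy (lvlf t m x) (lvlf t m y) with h' | h' | h'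
  · rw [if_pos h']; omega
  · exact absurd h' h
  · rw [if_neg (by omega), if_pos h']; omega

lemma cNat_eq_gfun {t m x y : ℕ} (h : lvlf t m x = lvlf t m y) (h0 : lvlf t m x = 0) :
    cNat t m x y = gfun (x / t) (y / t) := by
  unfold cNat
  rw [if_neg (by omega), if_neg (by omega), if_pos h0]

lemma cNat_eq_zero {t m x y : ℕ} (h : lvlf t m x = lvlf t m y) (h0 : lvlf t m x ≠ 0) :
    cNat t m x y = 0 := by
  unfold cNat
  rw [if_neg (by omega), if_neg (by omega), if_neg h0]

lemma cNat_symm {t m x y : ℕ} : cNat t m x y = cNat t m y x := by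
  by_cases h : lvlf t m x = lvlf t m y
  · by_cases h0 : lvlf t m x = 0
    · rw [cNat_eq_gfun h h0, cNat_eq_gfun h.symm (by omega)]
      have hx5 : x < 5 * t := lvlf_zero_iff.mp h0
      have hy5 : y < 5 * t := lvlf_zero_iff.mp (show lvlf t m y = 0 by omega)
      exact gfun_symm _ (div_lt5 hx5) _ (div_lt5 hy5)
    · rw [cNat_eq_zero h h0, cNat_eq_zero h.symm (by omega)]
  · rw [cNat_eq_max h, cNat_eq_max (Ne.symm h)]
    omega

lemma cNat_cases (t m x y : ℕ) :
    (lvlf t m x ≠ lvlf t m y ∧ 1 ≤ max (lvlf t m x) (lvlf t m y) ∧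
       cNat t m x y = max (lvlf t m x) (lvlf t m y) + 2)
    ∨ (lvlf t m x = lvlf t m y ∧ 1 ≤ lvlf t m x ∧ cNat t m x y = 0)
    ∨ (lvlf t m x = lvlf t m y ∧ lvlf t m x = 0 ∧
       cNat t m x y = gfun (x / t) (y / t)) := by
  by_cases h : lvlf t m x = lvlf t m y
  · by_cases h0 : lvlf t m x = 0
    · exact Or.inr (Or.inr ⟨h, h0, cNat_eq_gfun h h0⟩)
    · exact Or.inr (Or.inl ⟨h, by omega, cNat_eq_zero h h0⟩)
  · exact Or.inl ⟨h, by omega, cNat_eq_max h⟩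

lemma cNat_congr {t m u v w : ℕ} (h : lvlf t m u = lvlf t m v)
    (hne : lvlf t m u ≠ lvlf t m w) : cNat t m u w = cNat t m v w := by
  rw [cNat_eq_max hne, cNat_eq_max (by omega), h]

lemma block_mem {t m x L : ℕ} (hm : 1 ≤ m) (hL : lvlf t m x = L) (hL1 : 1 ≤ L) :
    x ∈ Finset.Ico (5*t + (L-1)*m) (5*t + (L-1)*m + m) := by
  unfold lvlf at hL
  split at hL
  · omega
  · rename_i hge
    have h1 := Nat.div_add_mod (x - 5*t) m
    have h2 : (x - 5*t) % m < m := Nat.mod_lt _ (by omega)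
    have h3 : (x - 5*t) / m = L - 1 := by omega
    have h4 := Nat.mul_comm (L-1) m
    rw [h3] at h1
    simp only [Finset.mem_Ico]
    omega

lemma part_mem {t x b : ℕ} (ht : 1 ≤ t) (hx : x < 5 * t) (hb : x / t = b) :
    x ∈ Finset.Ico (b * t) (b * t + t) := by
  have h1 := Nat.div_add_mod x t
  have h2 : x % t < t := Nat.mod_lt _ (by omega)
  have h3 := Nat.mul_comm b t
  rw [hb] at h1
  simp only [Finset.mem_Ico]
  omega

lemma icoCard (p t : ℕ) : (Finset.Ico p (p+t)).card = t := by
  rw [Nat.card_Ico]; omega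

lemma card_le_of_val_mem {N : ℕ} (s : Finset (Fin N)) (T : Finset ℕ)
    (h : ∀ x ∈ s, (x : ℕ) ∈ T) : s.card ≤ T.card :=
  Finset.card_le_card_of_injOn (fun x => (x : ℕ)) h (Fin.val_injective.injOn)

lemma two_part_bound {N t : ℕ} (s : Finset (Fin N)) (b1 b2 : ℕ) (ht : 1 ≤ t)
    (h : ∀ x ∈ s, (x : ℕ) < 5 * t ∧ ((x : ℕ) / t = b1 ∨ (x : ℕ) / t = b2)) :
    s.card ≤ 2 * t := by
  have hsub : ∀ x ∈ s, (x : ℕ) ∈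
      Finset.Ico (b1*t) (b1*t+t) ∪ Finset.Ico (b2*t) (b2*t+t) := by
    intro x hx
    obtain ⟨hx5, hb⟩ := h x hx
    rcases hb with hb | hb
    · exact Finset.mem_union_left _ (part_mem ht hx5 hb)
    · exact Finset.mem_union_right _ (part_mem ht hx5 hb)
  calc s.card ≤ _ := card_le_of_val_mem s _ hsub
    _ ≤ _ + _ := Finset.card_union_le _ _
    _ ≤ 2 * t := by rw [icoCard, icoCard]; omega

lemma block_bound {N t m L : ℕ} (s : Finset (Fin N)) (hm : 1 ≤ m) (hL : 1 ≤ L)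
    (h : ∀ x ∈ s, lvlf t m (x : ℕ) = L) : s.card ≤ m := by
  have := card_le_of_val_mem s (Finset.Ico (5*t + (L-1)*m) (5*t + (L-1)*m + m))
    (fun x hx => block_mem hm (h x hx) hL)
  rwa [icoCard] at this

end Stmt3Aux

namespace Stmt3Aux

def cF (t m k : ℕ) (hk0 : 0 < k) (N : ℕ) : Fin N → Fin N → Fin k :=
  fun x y => ⟨cNat t m x.val y.val % k, Nat.mod_lt _ hk0⟩

end Stmt3Aux

open Stmt3Aux

/-- For k ≥ 4, n ≥ m ≥ 1, n even: a rainbow-triangle-free k-coloring of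
`K_{5n/2 + m(k-3)}` with no monochromatic `S(n,m)`. -/
theorem stmt_3 (n m k : ℕ) (hm : 1 ≤ m) (hmn : m ≤ n) (hk : 4 ≤ k) (hn : Even n) :
    grAvoid k n m (5 * (n / 2) + m * (k - 3)) := by
  obtain ⟨r, hr⟩ := hn
  have ht2 : n = 2 * (n / 2) := by omega
  set t := n / 2 with htdef
  have ht1 : 1 ≤ t := by omega
  set N := 5 * t + m * (k - 3) with hN
  have hk0 : 0 < k := by omega
  have hval : ∀ x y : Fin N, (cF t m k hk0 N x y).val = cNat t m x.val y.val := by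
    intro x y
    show cNat t m x.val y.val % k = _
    exact Nat.mod_eq_of_lt (cNat_lt hm hk (by have := x.isLt; omega) (by have := y.isLt; omega))
  refine ⟨cF t m k hk0 N, ?_, ?_, ?_⟩
  · -- symmetric
    intro x y
    apply Fin.ext
    rw [hval, hval]
    exact cNat_symm
  · -- no rainbow triangle
    rintro ⟨u, v, w, -, -, -, h1, h2, h3⟩
    have e1 : cNat t m u.val v.val ≠ cNat t m u.val w.val := by
      intro h; exact h1 (Fin.ext (by rw [hval, hval, h]))
    have e2 : cNat t m u.val v.val ≠ cNat t m v.val w.val := by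
      intro h; exact h2 (Fin.ext (by rw [hval, hval, h]))
    have e3 : cNat t m u.val w.val ≠ cNat t m v.val w.val := by
      intro h; exact h3 (Fin.ext (by rw [hval, hval, h]))
    have key : cNat t m u.val v.val = cNat t m u.val w.val ∨
        cNat t m u.val v.val = cNat t m v.val w.val ∨
        cNat t m u.val w.val = cNat t m v.val w.val := by
      by_cases h1' : lvlf t m u.val = lvlf t m v.val
      · by_cases h2' : lvlf t m u.val = lvlf t m w.val
        · by_cases h0 : lvlf t m u.val = 0
          · have hu5 : u.val < 5 * t := lvlf_zero_iff.mp h0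
            have hv5 : v.val < 5 * t := lvlf_zero_iff.mp (show lvlf t m v.val = 0 by omega)
            have hw5 : w.val < 5 * t := lvlf_zero_iff.mp (show lvlf t m w.val = 0 by omega)
            rw [cNat_eq_gfun h1' h0, cNat_eq_gfun h2' h0,
              cNat_eq_gfun (show lvlf t m v.val = lvlf t m w.val by omega) (by omega)]
            exact gfun_tri _ (div_lt5 hu5) _ (div_lt5 hv5) _ (div_lt5 hw5)
          · left
            rw [cNat_eq_zero h1' h0, cNat_eq_zero h2' h0]
        · right; right
          exact cNat_congr h1' h2'
      · by_cases h2' : lvlf t m u.val = lvlf t m w.val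
        · right; left
          rw [cNat_congr h2' h1', cNat_symm]
        · by_cases h3' : lvlf t m v.val = lvlf t m w.val
          · left
            have hc : cNat t m v.val u.val = cNat t m w.val u.val :=
              cNat_congr h3' (show lvlf t m v.val ≠ lvlf t m u.val by omega)
            rw [cNat_symm (x := u.val), hc, cNat_symm]
          · rw [cNat_eq_max h1', cNat_eq_max h2', cNat_eq_max h3']
            omega
    rcases key with h | h | h
    · exact e1 h
    · exact e2 h
    · exact e3 h
  · -- no mono double star
    rintro ⟨u, v, A, B, col, huv, hA, hB, hAB, huA, huB, hvA, hvB, hcuv, hAc, hBc⟩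
    have hcv : cNat t m u.val v.val = col.val := by rw [← hval, hcuv]
    have hSu : ∀ x ∈ insert v A, cNat t m u.val x.val = col.val := by
      intro x hx
      rcases Finset.mem_insert.mp hx with rfl | hx
      · exact hcv
      · rw [← hval, hAc x hx]
    have hSv : ∀ x ∈ insert u B, cNat t m v.val x.val = col.val := by
      intro x hx
      rcases Finset.mem_insert.mp hx with rfl | hx
      · rw [cNat_symm]; exact hcv
      · rw [← hval, hBc x hx]
    have hSucard : (insert v A).card = n + 1 := by
      rw [Finset.card_insert_of_notMem hvA, hA]
    have hSvcard : (insert u B).card = m + 1 := by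
      rw [Finset.card_insert_of_notMem huB, hB]
    rcases Nat.lt_or_ge col.val 3 with hcol | hcol
    · -- small colors: neighbors all at level of u
      have hlev : ∀ x ∈ insert v A, lvlf t m x.val = lvlf t m u.val := by
        intro x hx
        have hcx := hSu x hx
        rcases cNat_cases t m u.val x.val with ⟨hne2, hge, hv'⟩ | ⟨heq, hge, hv'⟩ | ⟨heq, hz, hv'⟩
        · omega
        · omega
        · omega
      by_cases h0 : lvlf t m u.val = 0
      · have hu5 : u.val < 5 * t := lvlf_zero_iff.mp h0
        have ha : u.val / t < 5 := div_lt5 hu5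
        have hxmem : ∀ x ∈ insert v A, x.val < 5 * t ∧
            gfun (u.val / t) (x.val / t) = col.val := by
          intro x hx
          have hl := hlev x hx
          have hx5 : x.val < 5 * t := lvlf_zero_iff.mp (show lvlf t m x.val = 0 by omega)
          refine ⟨hx5, ?_⟩
          have hg := cNat_eq_gfun (show lvlf t m u.val = lvlf t m x.val by omega) h0
          have hcx := hSu x hx
          omega
        have hc3 : col.val = 0 ∨ col.val = 1 ∨ col.val = 2 := by omega
        rcases hc3 with hc | hc | hc
        · have key := two_part_bound (insert v A) ((u.val/t+1) % 5) ((u.val/t+4) % 5) ht1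
            (fun x hx => by
              obtain ⟨hx5, hg⟩ := hxmem x hx
              exact ⟨hx5, gfun_eq0 _ ha _ (div_lt5 hx5) (by omega)⟩)
          omega
        · have key := two_part_bound (insert v A) ((u.val/t+2) % 5) ((u.val/t+3) % 5) ht1
            (fun x hx => by
              obtain ⟨hx5, hg⟩ := hxmem x hx
              exact ⟨hx5, gfun_eq1 _ ha _ (div_lt5 hx5) (by omega)⟩)
          omega
        · have key := two_part_bound (insert v A) (u.val/t) (u.val/t) ht1
            (fun x hx => by
              obtain ⟨hx5, hg⟩ := hxmem x hx
              exact ⟨hx5, Or.inl (gfun_eq2 _ ha _ (div_lt5 hx5) (by omega))⟩)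
          omega
      · have key := block_bound (insert v A) hm (show 1 ≤ lvlf t m u.val by omega) hlev
        omega
    · -- block colors
      have hul : lvlf t m u.val = col.val - 2 := by
        by_contra hne
        have hmem : ∀ x ∈ insert v A, lvlf t m x.val = col.val - 2 := by
          intro x hx
          have hcx := hSu x hx
          rcases cNat_cases t m u.val x.val with ⟨hne2, hge, hv'⟩ | ⟨heq, hge, hv'⟩ | ⟨heq, hz, hv'⟩
          · omega
          · omega
          · have := gfun_le (u.val / t) (x.val / t); omega
        have key := block_bound (insert v A) hm (show 1 ≤ col.val - 2 by omega) hmem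
        omega
      have hvl : lvlf t m v.val = col.val - 2 := by
        by_contra hne
        have hmem : ∀ x ∈ insert u B, lvlf t m x.val = col.val - 2 := by
          intro x hx
          have hcx := hSv x hx
          rcases cNat_cases t m v.val x.val with ⟨hne2, hge, hv'⟩ | ⟨heq, hge, hv'⟩ | ⟨heq, hz, hv'⟩
          · omega
          · omega
          · have := gfun_le (v.val / t) (x.val / t); omega
        have key := block_bound (insert u B) hm (show 1 ≤ col.val - 2 by omega) hmem
        omega
      have h00 := cNat_eq_zero (show lvlf t m u.val = lvlf t m v.val by omega)
        (show lvlf t m u.val ≠ 0 by omega)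
      omega
end

section
/- For all integers k ≥ 4 and n ≥ m ≥ 1 with n odd, there exists a k-edge-coloring of the complete graph on 5(n-1)/2 + m(k-3) + 1 vertices containing no rainbow triangle and no monochromatic copy of the double star S(n,m). -/
open Finset

/-! Blow up the 2-colouring of `K₅` by the pentagon and its complement (colours `0, 1`),
giving the five classes sizes `t + 1, t, t, t, t` where `n = 2t + 1`, and colour `2` inside
each class. Then append `k - 3` groups of `m` vertices, the `j`-th group coloured `2` inside and
joined to everything before it in the new colour `j + 3`. In every triangle the vertex of largest
label sees the other two in one colour unless all three lie in the pentagon part, where only two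
colours occur; so there is no rainbow triangle. A monochromatic `S(n, m)` with centres `u, v`
needs more than `n` vertices in the colour class of `u` and more than `m` in that of `v`; but a
new colour reaches at most `m` vertices from the lower endpoint of its edge, a pentagon colour at
most `2t + 1 = n`, and colour `2` at most `max (t + 1) m`. -/

theorem HasMonoDoubleStar.comp {V C D : Type*} {c : V → V → C} {n m : ℕ} (g : C → D)
    (h : HasMonoDoubleStar c n m) : HasMonoDoubleStar (fun u v => g (c u v)) n m := by
  obtain ⟨u, v, A, B, col, huv, hA, hB, hAB, huA, huB, hvA, hvB, rfl, hAcol, hBcol⟩ := h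
  exact ⟨u, v, A, B, g (c u v), huv, hA, hB, hAB, huA, huB, hvA, hvB, rfl,
    fun a ha => congrArg g (hAcol a ha), fun b hb => congrArg g (hBcol b hb)⟩

theorem not_hasRainbowTriangle_of_forall {V C : Type*} {c : V → V → C}
    (hc : ∀ u v w, c u v = c u w ∨ c u v = c v w ∨ c u w = c v w) :
    ¬HasRainbowTriangle c := by
  rintro ⟨u, v, w, -, -, -, h₁, h₂, h₃⟩
  rcases hc u v w with h | h | h <;> contradiction

theorem not_hasMonoDoubleStar_of_card_filter_le {V C : Type*} [Fintype V] [DecidableEq V]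
    [DecidableEq C] {c : V → V → C} {n m : ℕ} (hc : IsSymmColoring c)
    (hcard : ∀ u v, u ≠ v → #{x | c u x = c u v} ≤ n ∨ #{x | c v x = c u v} ≤ m) :
    ¬HasMonoDoubleStar c n m := by
  rintro ⟨u, v, A, B, _, huv, hA, hB, -, -, huB, hvA, -, rfl, hAcol, hBcol⟩
  have hu : insert v A ⊆ ({x | c u x = c u v} : Finset V) := by
    intro x hx
    rcases mem_insert.1 hx with rfl | hx
    exacts [mem_filter.2 ⟨mem_univ _, rfl⟩, mem_filter.2 ⟨mem_univ _, hAcol x hx⟩]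
  have hv : insert u B ⊆ ({x | c v x = c u v} : Finset V) := by
    intro x hx
    rcases mem_insert.1 hx with rfl | hx
    exacts [mem_filter.2 ⟨mem_univ _, hc v x⟩, mem_filter.2 ⟨mem_univ _, hBcol x hx⟩]
  have hu' := card_le_card hu
  have hv' := card_le_card hv
  rw [card_insert_of_notMem hvA, hA] at hu'
  rw [card_insert_of_notMem huB, hB] at hv'
  rcases hcard u v huv with h | h <;> omega

theorem Fin.card_filter_le_of_forall_mem {N : ℕ} {p : ℕ → Prop} [DecidablePred p]
    {s : Finset ℕ} (h : ∀ x < N, p x → x ∈ s) : #{x : Fin N | p x} ≤ #s :=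
  card_le_card_of_injOn Fin.val (fun x hx => h x x.isLt (mem_filter.1 hx).2)
    Fin.val_injective.injOn

namespace GallaiDoubleStar

def pentagonColor (a b : ℕ) : ℕ :=
  if (a + 1) % 5 = b ∨ (b + 1) % 5 = a then 0 else 1

/-- The colouring of the reduced graph on labels: labels `0, …, 4` are the pentagon classes,
label `5 + j` is the `j`-th appended group, and colour `2` is used inside every class. -/
def labelColor (a b : ℕ) : ℕ :=
  if a = b then 2 else if 5 ≤ max a b then max a b - 2 else pentagonColor a b

/-- The pentagon classes are the residues mod `5` of `0, …, 5t`; the groups follow in blocks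
of `m`. -/
def blockLabel (t m x : ℕ) : ℕ :=
  if x < 5 * t + 1 then x % 5 else 5 + (x - (5 * t + 1)) / m

def blockColoring (t m N : ℕ) (x y : Fin N) : ℕ :=
  labelColor (blockLabel t m x) (blockLabel t m y)

def labelClass (a b : ℕ) : Finset ℕ :=
  (range 5).filter fun y => labelColor a y = labelColor a b

theorem labelColor_comm (a b : ℕ) : labelColor a b = labelColor b a := by
  unfold labelColor pentagonColor
  split_ifs <;> omega

theorem labelColor_triangle (a b d : ℕ) :
    labelColor a b = labelColor a d ∨ labelColor a b = labelColor b d ∨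
      labelColor a d = labelColor b d := by
  unfold labelColor pentagonColor
  split_ifs <;> omega

theorem labelColor_lt {a b k : ℕ} (hk : 3 ≤ k) (ha : a ≤ k + 1) (hb : b ≤ k + 1) :
    labelColor a b < k := by
  unfold labelColor pentagonColor
  split_ifs <;> omega

theorem eq_of_labelColor_eq {a b x : ℕ} (hb : 5 ≤ b) (hab : a ≤ b)
    (h : labelColor a x = labelColor a b) : x = b := by
  unfold labelColor pentagonColor at h
  split_ifs at h <;> omega

theorem mem_labelClass {a b x : ℕ} (ha : a < 5) (hb : b < 5)
    (h : labelColor a x = labelColor a b) : x ∈ labelClass a b := by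
  refine mem_filter.2 ⟨mem_range.2 ?_, h⟩
  unfold labelColor pentagonColor at h
  split_ifs at h <;> omega

theorem card_labelClass_le {a b : ℕ} (ha : a < 5) (hb : b < 5) : #(labelClass a b) ≤ 2 := by
  interval_cases a <;> interval_cases b <;> decide

theorem blockLabel_le {t m k x : ℕ} (hm : 0 < m) (hk : 3 ≤ k)
    (hx : x < 5 * t + m * (k - 3) + 1) : blockLabel t m x ≤ k + 1 := by
  unfold blockLabel
  split_ifs with h
  · omega
  · have : (x - (5 * t + 1)) / m < k - 3 := by
      rw [Nat.div_lt_iff_lt_mul hm, Nat.mul_comm (k - 3)]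
      omega
    omega

theorem blockColoring_lt {t m k : ℕ} (hm : 0 < m) (hk : 3 ≤ k)
    (x y : Fin (5 * t + m * (k - 3) + 1)) : blockColoring t m _ x y < k :=
  labelColor_lt hk (blockLabel_le hm hk x.isLt) (blockLabel_le hm hk y.isLt)

theorem card_filter_blockLabel_mem_le {N t m : ℕ} {S : Finset ℕ} (hS : S ⊆ range 5) :
    #{x : Fin N | blockLabel t m x ∈ S} ≤ t * #S + 1 := by
  calc #{x : Fin N | blockLabel t m x ∈ S}
      ≤ #(insert (5 * t) ((range t ×ˢ S).image fun p => 5 * p.1 + p.2)) := by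
        refine Fin.card_filter_le_of_forall_mem (p := (blockLabel t m · ∈ S)) fun x _ hx => ?_
        have h5 := mem_range.1 (hS hx)
        unfold blockLabel at hx h5
        split_ifs at hx h5 with hxt
        · rcases eq_or_ne x (5 * t) with rfl | hne
          · exact mem_insert_self _ _
          · refine mem_insert_of_mem (mem_image.2 ⟨(x / 5, x % 5), ?_, by omega⟩)
            exact mem_product.2 ⟨mem_range.2 (by omega), hx⟩
        · exact absurd h5 (Nat.not_lt.2 (Nat.le_add_right _ _))
    _ ≤ t * #S + 1 := by
        grw [card_insert_le, card_image_le, card_product, card_range]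

theorem card_filter_blockLabel_eq_le {N t m i : ℕ} (hm : 0 < m) (hi : 5 ≤ i) :
    #{x : Fin N | blockLabel t m x = i} ≤ m := by
  calc #{x : Fin N | blockLabel t m x = i}
      ≤ #(Ico (5 * t + 1 + (i - 5) * m) (5 * t + 1 + (i - 5) * m + m)) := by
        refine Fin.card_filter_le_of_forall_mem (p := (blockLabel t m · = i)) fun x _ hx => ?_
        unfold blockLabel at hx
        split_ifs at hx with hxt
        · omega
        · have hq : (x - (5 * t + 1)) / m = i - 5 := by omega
          have hlo := Nat.div_mul_le_self (x - (5 * t + 1)) m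
          have hhi := Nat.lt_div_mul_add (a := x - (5 * t + 1)) hm
          rw [hq] at hlo hhi
          exact mem_Ico.2 ⟨by omega, by omega⟩
    _ = m := by simp

theorem blockColoring_card_filter_le {N t m : ℕ} (hm : 0 < m) (hmt : m ≤ 2 * t + 1)
    (u v : Fin N) :
    #{x | blockColoring t m N u x = blockColoring t m N u v} ≤ 2 * t + 1 ∨
      #{x | blockColoring t m N v x = blockColoring t m N u v} ≤ m := by
  unfold blockColoring
  set a := blockLabel t m u
  set b := blockLabel t m v
  by_cases hab : a ≤ b ∧ 5 ≤ b
  · left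
    calc _ ≤ #{x : Fin N | blockLabel t m x = b} :=
          card_le_card (monotone_filter_right _ fun x _ => eq_of_labelColor_eq hab.2 hab.1)
      _ ≤ 2 * t + 1 := (card_filter_blockLabel_eq_le hm hab.2).trans hmt
  by_cases hba : b < a ∧ 5 ≤ a
  · right
    rw [labelColor_comm a b]
    calc _ ≤ #{x : Fin N | blockLabel t m x = a} :=
          card_le_card (monotone_filter_right _ fun x _ => eq_of_labelColor_eq hba.2 hba.1.le)
      _ ≤ m := card_filter_blockLabel_eq_le hm hba.2
  · left
    have ha : a < 5 := by omega
    have hb : b < 5 := by omega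
    calc _ ≤ #{x : Fin N | blockLabel t m x ∈ labelClass a b} :=
          card_le_card (monotone_filter_right _ fun x _ => mem_labelClass ha hb)
      _ ≤ t * #(labelClass a b) + 1 := card_filter_blockLabel_mem_le (filter_subset _ _)
      _ ≤ 2 * t + 1 := by grw [card_labelClass_le ha hb, mul_comm]

end GallaiDoubleStar

open GallaiDoubleStar in
/-- For k ≥ 4, n ≥ m ≥ 1, n odd: a rainbow-triangle-free k-coloring of
`K_{5(n-1)/2 + m(k-3) + 1}` with no monochromatic `S(n,m)`. -/
theorem stmt_4 (n m k : ℕ) (hm : 1 ≤ m) (hmn : m ≤ n) (hk : 4 ≤ k) (hn : Odd n) :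
    grAvoid k n m (5 * ((n - 1) / 2) + m * (k - 3) + 1) := by
  obtain ⟨t, rfl⟩ := hn
  rw [show (2 * t + 1 - 1) / 2 = t by omega]
  refine ⟨fun u v => ⟨blockColoring t m _ u v, blockColoring_lt hm (by omega) u v⟩,
    fun u v => Fin.ext (labelColor_comm _ _), fun h => ?_, fun h => ?_⟩
  · refine not_hasRainbowTriangle_of_forall (fun u v w => ?_) h
    simpa only [Fin.ext_iff, blockColoring] using labelColor_triangle _ _ _
  · exact not_hasMonoDoubleStar_of_card_filter_le (fun _ _ => labelColor_comm _ _)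
      (fun u v _ => blockColoring_card_filter_le hm hmn u v) (h.comp Fin.val)
end

section
/- For all integers k ≥ 3 and n ≥ m ≥ 1, if there exists a 2-edge-coloring of the complete graph on n + 2m + 1 vertices with no monochromatic copy of the double star S(n,m), then there exists a k-edge-coloring of the complete graph on n + 2m + 1 + m(k-3) vertices containing no rainbow triangle and no monochromatic copy of S(n,m). -/
open Finset

/-- If there is a 2-coloring of `K_{n+2m+1}` with no monochromatic `S(n,m)`, then
for every k ≥ 3 there is a k-coloring of `K_{n+2m+1+m(k-3)}` with no rainbow
triangle and no monochromatic `S(n,m)`. -/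
theorem stmt_5 (n m k : ℕ) (hm : 1 ≤ m) (hmn : m ≤ n) (hk : 3 ≤ k)
    (h2 : ∃ c : Fin (n + 2 * m + 1) → Fin (n + 2 * m + 1) → Fin 2,
      IsSymmColoring c ∧ ¬ HasMonoDoubleStar c n m) :
    grAvoid k n m (n + 2 * m + 1 + m * (k - 3)) := by
  set N0 : ℕ := n + 2 * m + 1 with hN0def
  set N : ℕ := N0 + m * (k - 3) with hNdef
  obtain ⟨c0, hc0symm, hc0⟩ := h2
  have hk2 : 2 ≤ k := by omega
  -- the level of a vertex: 0 for the base graph, j for the j-th added clique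
  let lvl : Fin N → ℕ := fun x => if x.val < N0 then 0 else (x.val - N0) / m + 1
  have hlvl0 : ∀ x : Fin N, lvl x = 0 ↔ x.val < N0 := by
    intro x; simp only [lvl]; split <;> simp_all
  have hlvl_lt : ∀ x : Fin N, lvl x + 1 < k := by
    intro x
    simp only [lvl]
    split
    · omega
    · have hx := x.isLt
      have h1 : (x.val - N0) / m < k - 3 := Nat.div_lt_of_lt_mul (by omega)
      omega
  have hmax : ∀ u v : Fin N, max (lvl u) (lvl v) + 1 < k := by
    intro u v; have := hlvl_lt u; have := hlvl_lt v; omega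
  -- the coloring
  let c : Fin N → Fin N → Fin k := fun u v =>
    if h : lvl u = lvl v then
      if hu : u.val < N0 then
        if hv : v.val < N0 then Fin.castLE hk2 (c0 ⟨u.val, hu⟩ ⟨v.val, hv⟩)
        else ⟨0, by omega⟩
      else ⟨0, by omega⟩
    else ⟨max (lvl u) (lvl v) + 1, hmax u v⟩
  have hne : ∀ u v : Fin N, lvl u ≠ lvl v →
      (c u v).val = max (lvl u) (lvl v) + 1 := by
    intro u v h; simp only [c, dif_neg h]
  have hle : ∀ u v : Fin N, lvl u = lvl v → (c u v).val ≤ 1 := by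
    intro u v h
    simp only [c, dif_pos h]
    split
    · split
      · simp only [Fin.coe_castLE]
        exact Fin.is_le _
      · simp
    · simp
  have hloweq : ∀ u v : Fin N, (c u v).val ≤ 1 → lvl u = lvl v := by
    intro u v h
    by_contra hne'
    rw [hne u v hne'] at h
    omega
  have hbase : ∀ (u v : Fin N) (hu : u.val < N0) (hv : v.val < N0),
      c u v = Fin.castLE hk2 (c0 ⟨u.val, hu⟩ ⟨v.val, hv⟩) := by
    intro u v hu hv
    have h : lvl u = lvl v := by
      rw [(hlvl0 u).mpr hu, (hlvl0 v).mpr hv]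
    simp only [c, dif_pos h, dif_pos hu, dif_pos hv]
  have hhi : ∀ u v : Fin N, lvl u = lvl v → ¬ u.val < N0 → (c u v).val = 0 := by
    intro u v h hu
    simp only [c, dif_pos h, dif_neg hu]
  -- each nonzero level class has at most m vertices
  have hlevelcard : ∀ (j : ℕ), 1 ≤ j → ∀ S : Finset (Fin N),
      (∀ x ∈ S, lvl x = j) → S.card ≤ m := by
    intro j hj S hS
    have hbounds : ∀ x ∈ S, N0 + m * (j - 1) ≤ x.val ∧
        x.val < N0 + m * (j - 1) + m := by
      intro x hx
      have hx' := hS x hx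
      have hxN : ¬ x.val < N0 := fun hc => by
        rw [(hlvl0 x).mpr hc] at hx'; omega
      have hdiv : (x.val - N0) / m = j - 1 := by
        simp only [lvl, if_neg hxN] at hx'; omega
      have hmod := Nat.div_add_mod (x.val - N0) m
      have hmlt : (x.val - N0) % m < m := Nat.mod_lt _ (by omega)
      rw [hdiv] at hmod
      omega
    calc S.card ≤ (Finset.range m).card := Finset.card_le_card_of_injOn
          (fun x => x.val - (N0 + m * (j - 1)))
          (fun x hx => by
            have := hbounds x hx
            simp only [Finset.coe_range, Set.mem_Iio, Finset.mem_coe, Finset.mem_range]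
            omega)
          (fun x hx y hy hxy => by
            have h1 := hbounds x hx; have h2 := hbounds y hy
            have hxy' : x.val - (N0 + m * (j - 1)) = y.val - (N0 + m * (j - 1)) := hxy
            exact Fin.ext (by omega))
      _ = m := Finset.card_range m
  -- symmetry
  have hsymm : IsSymmColoring c := by
    intro u v
    by_cases h : lvl u = lvl v
    · by_cases hu : u.val < N0
      · have hv : v.val < N0 := (hlvl0 v).mp (by rw [← h]; exact (hlvl0 u).mpr hu)
        rw [hbase u v hu hv, hbase v u hv hu, hc0symm]
      · have hv : ¬ v.val < N0 := fun hc => by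
          have := (hlvl0 v).mpr hc
          have := (hlvl0 u)
          omega
        exact Fin.ext (by rw [hhi u v h hu, hhi v u h.symm hv])
    · have h' : lvl v ≠ lvl u := fun e => h e.symm
      exact Fin.ext (by rw [hne u v h, hne v u h', Nat.max_comm])
  -- no rainbow triangle
  have hnorb : ¬ HasRainbowTriangle c := by
    rintro ⟨u, v, w, huv, huw, hvw, h1, h2, h3⟩
    by_cases e1 : lvl u = lvl v
    · by_cases e2 : lvl u = lvl w
      · have a1 := hle u v e1
        have a2 := hle u w e2
        have a3 := hle v w (e1.symm.trans e2)
        have : (c u v).val = (c u w).val ∨ (c u v).val = (c v w).val ∨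
            (c u w).val = (c v w).val := by omega
        rcases this with h | h | h
        · exact h1 (Fin.ext h)
        · exact h2 (Fin.ext h)
        · exact h3 (Fin.ext h)
      · have e3 : lvl v ≠ lvl w := fun e => e2 (e1.trans e)
        exact h3 (Fin.ext (by rw [hne u w e2, hne v w e3, e1]))
    · by_cases e2 : lvl u = lvl w
      · have e3 : lvl v ≠ lvl w := fun e => e1 (by rw [e2, ← e]) 
        exact h2 (Fin.ext (by rw [hne u v e1, hne v w e3, e2]; omega))
      · by_cases e3 : lvl v = lvl w
        · exact h1 (Fin.ext (by rw [hne u v e1, hne u w e2, e3]))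
        · -- all levels distinct
          have b1 := hne u v e1
          have b2 := hne u w e2
          have b3 := hne v w e3
          have : (c u v).val = (c u w).val ∨ (c u v).val = (c v w).val ∨
              (c u w).val = (c v w).val := by omega
          rcases this with h | h | h
          · exact h1 (Fin.ext h)
          · exact h2 (Fin.ext h)
          · exact h3 (Fin.ext h)
  -- no monochromatic double star
  have hnom : ¬ HasMonoDoubleStar c n m := by
    rintro ⟨u, v, A, B, col, huv, hA, hB, hAB, huA, huB, hvA, hvB, hcol, hAcol, hBcol⟩
    by_cases hcv : col.val ≤ 1
    · -- equal levels throughout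
      have h0 : lvl u = lvl v := hloweq u v (by rw [hcol]; exact hcv)
      have hAlev : ∀ a ∈ A, lvl a = lvl u := fun a ha =>
        (hloweq u a (by rw [hAcol a ha]; exact hcv)).symm
      have hBlev : ∀ b ∈ B, lvl b = lvl u := fun b hb => by
        rw [← (hloweq v b (by rw [hBcol b hb]; exact hcv)), ← h0]
      by_cases hu0 : u.val < N0
      · -- everything lies in the base graph: contradiction with hc0
        have hN0pos : 0 < N0 := by omega
        have hv0 : v.val < N0 := (hlvl0 v).mp (by rw [← h0]; exact (hlvl0 u).mpr hu0)
        have hA0 : ∀ a ∈ A, a.val < N0 := fun a ha =>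
          (hlvl0 a).mp (by rw [hAlev a ha]; exact (hlvl0 u).mpr hu0)
        have hB0 : ∀ b ∈ B, b.val < N0 := fun b hb =>
          (hlvl0 b).mp (by rw [hBlev b hb]; exact (hlvl0 u).mpr hu0)
        let g : Fin N → Fin N0 := fun x => ⟨x.val % N0, Nat.mod_lt _ hN0pos⟩
        have hg : ∀ x : Fin N, x.val < N0 → (g x).val = x.val := fun x hx =>
          Nat.mod_eq_of_lt hx
        have hginj : ∀ x y : Fin N, x.val < N0 → y.val < N0 → g x = g y → x = y := by
          intro x y hx hy hxy
          have := congrArg Fin.val hxy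
          rw [hg x hx, hg y hy] at this
          exact Fin.ext this
        have hc0val : ∀ (x y : Fin N) (hx : x.val < N0) (hy : y.val < N0),
            (c0 (g x) (g y)).val = (c x y).val := by
          intro x y hx hy
          have hgx : g x = ⟨x.val, hx⟩ := Fin.ext (hg x hx)
          have hgy : g y = ⟨y.val, hy⟩ := Fin.ext (hg y hy)
          rw [hgx, hgy, hbase x y hx hy]
          simp [Fin.coe_castLE]
        refine hc0 ⟨g u, g v, A.image g, B.image g, ⟨col.val, by omega⟩,
            ?_, ?_, ?_, ?_, ?_, ?_, ?_, ?_, ?_, ?_, ?_⟩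
        · intro e; exact huv (hginj u v hu0 hv0 e)
        · rw [Finset.card_image_of_injOn
            (fun x hx y hy e => hginj x y (hA0 x hx) (hA0 y hy) e), hA]
        · rw [Finset.card_image_of_injOn
            (fun x hx y hy e => hginj x y (hB0 x hx) (hB0 y hy) e), hB]
        · rw [Finset.disjoint_left]
          rintro x hxA hxB
          obtain ⟨a, ha, rfl⟩ := Finset.mem_image.mp hxA
          obtain ⟨b, hb, hba⟩ := Finset.mem_image.mp hxB
          have : b = a := hginj b a (hB0 b hb) (hA0 a ha) hba
          exact Finset.disjoint_left.mp hAB ha (this ▸ hb)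
        · intro hmem
          obtain ⟨a, ha, hga⟩ := Finset.mem_image.mp hmem
          exact huA ((hginj a u (hA0 a ha) hu0 hga) ▸ ha)
        · intro hmem
          obtain ⟨b, hb, hgb⟩ := Finset.mem_image.mp hmem
          exact huB ((hginj b u (hB0 b hb) hu0 hgb) ▸ hb)
        · intro hmem
          obtain ⟨a, ha, hga⟩ := Finset.mem_image.mp hmem
          exact hvA ((hginj a v (hA0 a ha) hv0 hga) ▸ ha)
        · intro hmem
          obtain ⟨b, hb, hgb⟩ := Finset.mem_image.mp hmem
          exact hvB ((hginj b v (hB0 b hb) hv0 hgb) ▸ hb)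
        · exact Fin.ext (by rw [hc0val u v hu0 hv0]; exact congrArg Fin.val hcol)
        · rintro a' ha'
          obtain ⟨a, ha, rfl⟩ := Finset.mem_image.mp ha'
          exact Fin.ext (by rw [hc0val u a hu0 (hA0 a ha)]; exact congrArg Fin.val (hAcol a ha))
        · rintro b' hb'
          obtain ⟨b, hb, rfl⟩ := Finset.mem_image.mp hb'
          exact Fin.ext (by rw [hc0val v b hv0 (hB0 b hb)]; exact congrArg Fin.val (hBcol b hb))
      · -- the centers lie in a clique of size m : too small
        have hj : 1 ≤ lvl u := by
          have := hlvl0 u; omega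
        have hcard := hlevelcard (lvl u) hj (insert v A) (by
          intro x hx
          rcases Finset.mem_insert.mp hx with rfl | hx
          · exact h0.symm
          · exact hAlev x hx)
        rw [Finset.card_insert_of_notMem hvA, hA] at hcard
        omega
    · -- col has value ≥ 2: a join color
      have hne' : lvl u ≠ lvl v := fun e => hcv (by rw [← hcol]; exact hle u v e)
      have hcolval : col.val = max (lvl u) (lvl v) + 1 := by
        rw [← hcol]; exact hne u v hne'
      rcases Nat.lt_or_ge (lvl u) (lvl v) with hlt | hge
      · -- all of A ∪ {v} lies in the clique of level (lvl v)
        have hAlev : ∀ a ∈ A, lvl a = lvl v := by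
          intro a ha
          have hna : lvl u ≠ lvl a := fun e => hcv (by
            rw [← hAcol a ha]; exact hle u a e)
          have := hne u a hna
          rw [hAcol a ha, hcolval] at this
          omega
        have hcard := hlevelcard (lvl v) (by omega) (insert v A) (by
          intro x hx
          rcases Finset.mem_insert.mp hx with rfl | hx
          · rfl
          · exact hAlev x hx)
        rw [Finset.card_insert_of_notMem hvA, hA] at hcard
        omega
      · have hlt : lvl v < lvl u := by omega
        have hBlev : ∀ b ∈ B, lvl b = lvl u := by
          intro b hb
          have hnb : lvl v ≠ lvl b := fun e => hcv (by
            rw [← hBcol b hb]; exact hle v b e)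
          have := hne v b hnb
          rw [hBcol b hb, hcolval] at this
          omega
        have hcard := hlevelcard (lvl u) (by omega) (insert u B) (by
          intro x hx
          rcases Finset.mem_insert.mp hx with rfl | hx
          · rfl
          · exact hBlev x hx)
        rw [Finset.card_insert_of_notMem huB, hB] at hcard
        omega
  exact ⟨c, hsymm, hnorb, hnom⟩
end

section
/- Let n, m, k be integers with n ≥ m ≥ 1 and k ≥ 3. Then gr_k(K_3 : S(n,m)) ≥ max{5·(n/2), n + 2m + 1} + m(k-3) + 1 if n is even, and gr_k(K_3 : S(n,m)) ≥ max{5·((n-1)/2), n + 2m + 1} + m(k-3) + 2 if n is odd. -/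
open Finset

/-!
Both colorings are Gallai colorings built in two steps: a small 3-colored base is blown up
(vertices become parts, edges inside a part get a fixed base color), and then `k - 3` groups of
`m` vertices are appended, the `g`-th group joined to everything before it in a fresh color
`g + 3`. Every color class then misses `S(n,m)` for a counting reason: it is a disjoint union of
cliques on at most `n + m + 1` vertices (while `S(n,m)` is connected on `n + m + 2`), or it has
maximum degree at most `n` (a center of `S(n,m)` has degree `n + 1`), or it is bipartite with a
side of at most `m` vertices (the center off that side has all its neighbours, the other center
included, on it).

The bound `n + 2m + 1` comes from three parts of sizes `m, m, t` with `t ≤ n + m + 1`: inside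
parts color 0, from the first part color 1, between the other two color 2. The bound `5⌊n/2⌋`
comes from the pentagon and its complement colored 0 and 1, blown up into parts of size
`⌊n/2⌋` (one of them enlarged by one vertex when `n` is odd), with color 2 inside parts.
-/

namespace GallaiDoubleStar

def HasMonoDoubleStarOfColor {V C : Type*} (c : V → V → C) (n m : ℕ) (col : C) : Prop :=
  ∃ (u v : V) (A B : Finset V),
    u ≠ v ∧ #A = n ∧ #B = m ∧ Disjoint A B ∧
    u ∉ A ∧ u ∉ B ∧ v ∉ A ∧ v ∉ B ∧
    c u v = col ∧ (∀ a ∈ A, c u a = col) ∧ (∀ b ∈ B, c v b = col)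

theorem hasMonoDoubleStar_iff_exists_color {V C : Type*} (c : V → V → C) (n m : ℕ) :
    HasMonoDoubleStar c n m ↔ ∃ col, HasMonoDoubleStarOfColor c n m col :=
  ⟨fun ⟨u, v, A, B, col, h⟩ => ⟨col, u, v, A, B, h⟩,
    fun ⟨col, u, v, A, B, h⟩ => ⟨u, v, A, B, col, h⟩⟩

section ColorClass

variable {V C : Type*} [DecidableEq V] {c : V → V → C} {n m : ℕ} {col : C}

theorem not_hasMonoDoubleStarOfColor_of_degree_le (T : V → Finset V) (hT : ∀ x, #(T x) ≤ n)
    (hc : ∀ x y, x ≠ y → c x y = col → y ∈ T x) :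
    ¬ HasMonoDoubleStarOfColor c n m col := by
  rintro ⟨u, v, A, B, huv, hA, -, -, huA, -, hvA, -, hcuv, hcA, -⟩
  have hsub : insert v A ⊆ T u :=
    insert_subset (hc u v huv hcuv) fun a ha => hc u a (ne_of_mem_of_not_mem ha huA).symm (hcA a ha)
  have := card_le_card hsub
  rw [card_insert_of_notMem hvA, hA] at this
  exact absurd (hT u) (by omega)

theorem not_hasMonoDoubleStarOfColor_of_fiber_card_le [Fintype V] {ι : Type*} [DecidableEq ι]
    (q : V → ι) (hq : ∀ i, #{x | q x = i} ≤ n + m + 1)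
    (hc : ∀ x y, x ≠ y → c x y = col → q x = q y) :
    ¬ HasMonoDoubleStarOfColor c n m col := by
  rintro ⟨u, v, A, B, huv, hA, hB, hAB, huA, huB, hvA, hvB, hcuv, hcA, hcB⟩
  have hqv : q v = q u := (hc u v huv hcuv).symm
  have hsub : insert u (insert v (A ∪ B)) ⊆ ({x | q x = q u} : Finset V) := by
    refine insert_subset ((mem_filter_univ _).2 rfl) (insert_subset ((mem_filter_univ _).2 hqv)
      (union_subset (fun a ha => (mem_filter_univ _).2 ?_) (fun b hb => (mem_filter_univ _).2 ?_)))
    · exact (hc u a (ne_of_mem_of_not_mem ha huA).symm (hcA a ha)).symm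
    · exact (hc v b (ne_of_mem_of_not_mem hb hvB).symm (hcB b hb)).symm.trans hqv
  have := card_le_card hsub
  rw [card_insert_of_notMem (by simp [huv, huA, huB]), card_insert_of_notMem (by simp [hvA, hvB]),
    card_union_of_disjoint hAB, hA, hB] at this
  exact absurd (hq (q u)) (by omega)

theorem not_hasMonoDoubleStarOfColor_of_crossing (S : Finset V) (hS : #S ≤ m) (hmn : m ≤ n)
    (hc : ∀ x y, x ≠ y → c x y = col → (x ∈ S ↔ y ∉ S)) :
    ¬ HasMonoDoubleStarOfColor c n m col := by
  rintro ⟨u, v, A, B, huv, hA, hB, -, huA, huB, hvA, hvB, hcuv, hcA, hcB⟩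
  have hout : ∀ x ∉ S, ∀ y, x ≠ y → c x y = col → y ∈ S := fun x hx y hxy hxy' => by
    by_contra hy
    exact hx ((hc x y hxy hxy').2 hy)
  by_cases hu : u ∈ S
  · have hv : v ∉ S := (hc u v huv hcuv).1 hu
    have hsub : insert u B ⊆ S := insert_subset hu fun b hb =>
      hout v hv b (ne_of_mem_of_not_mem hb hvB).symm (hcB b hb)
    have := card_le_card hsub
    rw [card_insert_of_notMem huB, hB] at this
    omega
  · have hsub : insert v A ⊆ S := insert_subset (hout u hu v huv hcuv) fun a ha =>
      hout u hu a (ne_of_mem_of_not_mem ha huA).symm (hcA a ha)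
    have := card_le_card hsub
    rw [card_insert_of_notMem hvA, hA] at this
    omega

end ColorClass

theorem not_hasRainbowTriangle_comp {V P C : Type*} (p : V → P) (f : P → P → C)
    (hf : ∀ a b c, f a b = f a c ∨ f a b = f b c ∨ f a c = f b c) :
    ¬ HasRainbowTriangle fun v w => f (p v) (p w) := by
  rintro ⟨u, v, w, -, -, -, h₁, h₂, h₃⟩
  rcases hf (p u) (p v) (p w) with h | h | h <;> contradiction

theorem grAvoid_of_card_eq {V : Type*} [Fintype V] {k n m N : ℕ} (c : V → V → Fin k)
    (hN : Fintype.card V = N) (hsymm : IsSymmColoring c) (hrainbow : ¬ HasRainbowTriangle c)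
    (hmono : ¬ HasMonoDoubleStar c n m) : grAvoid k n m N := by
  classical
  set e := (Fintype.equivFinOfCardEq hN).symm
  refine ⟨fun x y => c (e x) (e y), fun x y => hsymm _ _, ?_, ?_⟩
  · rintro ⟨u, v, w, h⟩
    exact hrainbow ⟨e u, e v, e w, by simpa only [e.injective.ne_iff] using h⟩
  · rintro ⟨u, v, A, B, col, huv, hA, hB, hAB, huA, huB, hvA, hvB, hcuv, hcA, hcB⟩
    refine hmono ⟨e u, e v, A.map e.toEmbedding, B.map e.toEmbedding, col,
      e.injective.ne huv, by simpa, by simpa, by simpa, by simpa, by simpa, by simpa, by simpa,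
      hcuv, forall_mem_map.2 hcA, forall_mem_map.2 hcB⟩

section BlowUp

variable {ι C : Type*} [Fintype ι] [DecidableEq ι] (s : ι → ℕ) {n m : ℕ} {col : C}

abbrev BlowUp := Σ i : ι, Fin (s i)

def blowUpColoring (f : ι → ι → C) (v w : BlowUp s) : C := f v.1 w.1

theorem card_filter_blowUp_fst_mem (N : Finset ι) :
    #({v | v.1 ∈ N} : Finset (BlowUp s)) = ∑ i ∈ N, s i := by
  rw [show ({v | v.1 ∈ N} : Finset (BlowUp s)) = N.sigma fun _ => univ by ext; simp,
    card_sigma]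
  simp

theorem card_filter_blowUp_fst_eq (i : ι) : #({v | v.1 = i} : Finset (BlowUp s)) = s i := by
  simpa using card_filter_blowUp_fst_mem s {i}

variable {s} {f : ι → ι → C}

theorem not_hasMonoDoubleStarOfColor_blowUp_of_crossing (i₀ : ι) (hs : s i₀ ≤ m) (hmn : m ≤ n)
    (hf : ∀ i j, f i j = col → (i = i₀ ↔ j ≠ i₀)) :
    ¬ HasMonoDoubleStarOfColor (blowUpColoring s f) n m col :=
  not_hasMonoDoubleStarOfColor_of_crossing {v | v.1 = i₀}
    ((card_filter_blowUp_fst_eq s i₀).trans_le hs) hmn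
    fun x y _ hxy => by simpa using hf x.1 y.1 hxy

theorem not_hasMonoDoubleStarOfColor_blowUp_of_diag (hs : ∀ i, s i ≤ n + m + 1)
    (hf : ∀ i j, f i j = col → i = j) :
    ¬ HasMonoDoubleStarOfColor (blowUpColoring s f) n m col :=
  not_hasMonoDoubleStarOfColor_of_fiber_card_le Sigma.fst
    (fun i => (card_filter_blowUp_fst_eq s i).trans_le (hs i)) fun x y _ hxy => hf x.1 y.1 hxy

theorem not_hasMonoDoubleStarOfColor_blowUp_of_nbhd (N : ι → Finset ι)
    (hN : ∀ i, ∑ j ∈ N i, s j ≤ n) (hf : ∀ i j, f i j = col → j ∈ N i) :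
    ¬ HasMonoDoubleStarOfColor (blowUpColoring s f) n m col :=
  not_hasMonoDoubleStarOfColor_of_degree_le (fun x => {v | v.1 ∈ N x.1})
    (fun x => (card_filter_blowUp_fst_mem s (N x.1)).trans_le (hN x.1))
    fun x y _ hxy => by simpa using hf x.1 y.1 hxy

end BlowUp

section AppendGroups

variable {β : Type*} {j : ℕ}

def appendGroups (b : β → β → Fin 3) (c₀ : Fin 3) : β ⊕ Fin j → β ⊕ Fin j → Fin (3 + j)
  | .inl x, .inl y => Fin.castAdd j (b x y)
  | .inl _, .inr g => Fin.natAdd 3 g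
  | .inr g, .inl _ => Fin.natAdd 3 g
  | .inr g, .inr g' => if g = g' then Fin.castAdd j c₀ else Fin.natAdd 3 (max g g')

variable {b : β → β → Fin 3} {c₀ : Fin 3}

theorem appendGroups_comm (hb : ∀ x y, b x y = b y x) (p q : β ⊕ Fin j) :
    appendGroups b c₀ p q = appendGroups b c₀ q p := by
  rcases p with x | g <;> rcases q with y | g'
  · simp [appendGroups, hb x y]
  · rfl
  · rfl
  · simp [appendGroups, eq_comm, max_comm]

theorem appendGroups_not_rainbow (hb : ∀ x y z, b x y = b x z ∨ b x y = b y z ∨ b x z = b y z)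
    (p q r : β ⊕ Fin j) :
    appendGroups b c₀ p q = appendGroups b c₀ p r ∨ appendGroups b c₀ p q = appendGroups b c₀ q r ∨
      appendGroups b c₀ p r = appendGroups b c₀ q r := by
  rcases p with x | g <;> rcases q with y | g' <;> rcases r with z | g'' <;>
    simp only [appendGroups]
  · simpa [Fin.castAdd_inj] using hb x y z
  -- a vertex of largest group index sees the other two in its own fresh color
  all_goals (try split_ifs) <;> simp_all [Fin.ext_iff] <;> omega

theorem appendGroups_eq_castAdd_iff {p q : β ⊕ Fin j} {col : Fin 3} :
    appendGroups b c₀ p q = Fin.castAdd j col ↔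
      (∃ x y, p = .inl x ∧ q = .inl y ∧ b x y = col) ∨
        (∃ g, p = .inr g ∧ q = .inr g ∧ c₀ = col) := by
  rcases p with x | g <;> rcases q with y | g'
  · simp [appendGroups]
  · simp [appendGroups, Fin.ext_iff]; omega
  · simp [appendGroups, Fin.ext_iff]; omega
  · by_cases hg : g = g'
    · subst hg; simp [appendGroups]
    · simp [appendGroups, hg, Fin.ext_iff]; omega

theorem appendGroups_eq_natAdd {p q : β ⊕ Fin j} {g : Fin j}
    (h : appendGroups b c₀ p q = Fin.natAdd 3 g) : (p = .inr g ↔ q ≠ .inr g) := by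
  rcases p with x | g' <;> rcases q with y | g''
  · simp [appendGroups, Fin.ext_iff] at h; omega
  · simp_all [appendGroups, Fin.ext_iff]
  · simp_all [appendGroups, Fin.ext_iff]
  · by_cases hg : g' = g'' <;> simp [appendGroups, hg, Fin.ext_iff] at h ⊢ <;> omega

variable [Fintype β] [DecidableEq β] (s : β → ℕ) {n m : ℕ}

theorem not_hasMonoDoubleStarOfColor_appendGroups_natAdd (hmn : m ≤ n) (g : Fin j) :
    ¬ HasMonoDoubleStarOfColor (blowUpColoring (Sum.elim s fun _ => m) (appendGroups b c₀)) n m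
      (Fin.natAdd 3 g) :=
  not_hasMonoDoubleStarOfColor_blowUp_of_crossing (.inr g) le_rfl hmn
    fun _ _ => appendGroups_eq_natAdd

variable {s} {col : Fin 3}

theorem not_hasMonoDoubleStarOfColor_appendGroups_of_crossing (x₀ : β) (hs : s x₀ ≤ m)
    (hmn : m ≤ n) (hc₀ : c₀ ≠ col) (hb : ∀ x y, b x y = col → (x = x₀ ↔ y ≠ x₀)) :
    ¬ HasMonoDoubleStarOfColor (blowUpColoring (Sum.elim s fun _ => m) (appendGroups b c₀)) n m
      (Fin.castAdd j col) := by
  refine not_hasMonoDoubleStarOfColor_blowUp_of_crossing (.inl x₀) hs hmn fun p q h => ?_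
  rcases appendGroups_eq_castAdd_iff.1 h with ⟨x, y, rfl, rfl, hxy⟩ | ⟨g, -, -, h₀⟩
  · simpa using hb x y hxy
  · exact absurd h₀ hc₀

theorem not_hasMonoDoubleStarOfColor_appendGroups_of_diag (hs : ∀ x, s x ≤ n + m + 1)
    (hb : ∀ x y, b x y = col → x = y) :
    ¬ HasMonoDoubleStarOfColor (blowUpColoring (Sum.elim s fun _ => m) (appendGroups b c₀)) n m
      (Fin.castAdd j col) := by
  refine not_hasMonoDoubleStarOfColor_blowUp_of_diag
    (Sum.rec hs fun _ => by simp only [Sum.elim_inr]; omega) fun p q h => ?_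
  rcases appendGroups_eq_castAdd_iff.1 h with ⟨x, y, rfl, rfl, hxy⟩ | ⟨g, rfl, rfl, -⟩
  · rw [hb x y hxy]
  · rfl

theorem not_hasMonoDoubleStarOfColor_appendGroups_of_nbhd (N : β → Finset β)
    (hN : ∀ x, ∑ y ∈ N x, s y ≤ n) (hc₀ : c₀ ≠ col) (hb : ∀ x y, b x y = col → y ∈ N x) :
    ¬ HasMonoDoubleStarOfColor (blowUpColoring (Sum.elim s fun _ => m) (appendGroups b c₀)) n m
      (Fin.castAdd j col) := by
  refine not_hasMonoDoubleStarOfColor_blowUp_of_nbhd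
    (Sum.elim (fun x => (N x).map .inl) fun _ => ∅)
    (Sum.rec (fun x => by simpa using hN x) fun _ => by simp) fun p q h => ?_
  rcases appendGroups_eq_castAdd_iff.1 h with ⟨x, y, rfl, rfl, hxy⟩ | ⟨g, -, -, h₀⟩
  · simpa using hb x y hxy
  · exact absurd h₀ hc₀

end AppendGroups

theorem grAvoid_appendGroups {β : Type*} [Fintype β] [DecidableEq β] {n m j N : ℕ}
    (b : β → β → Fin 3) (c₀ : Fin 3) (s : β → ℕ) (hmn : m ≤ n) (hN : ∑ x, s x + m * j = N)
    (hsymm : ∀ x y, b x y = b y x)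
    (hrainbow : ∀ x y z, b x y = b x z ∨ b x y = b y z ∨ b x z = b y z)
    (hbase : ∀ col : Fin 3, ¬ HasMonoDoubleStarOfColor
      (blowUpColoring (Sum.elim s fun _ => m) (appendGroups (j := j) b c₀)) n m
      (Fin.castAdd j col)) :
    grAvoid (3 + j) n m N := by
  refine grAvoid_of_card_eq (blowUpColoring (Sum.elim s fun _ => m) (appendGroups b c₀)) ?_
    (fun v w => appendGroups_comm hsymm _ _)
    (not_hasRainbowTriangle_comp Sigma.fst _ (appendGroups_not_rainbow hrainbow)) ?_
  · simp [← hN, mul_comm]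
  · rw [hasMonoDoubleStar_iff_exists_color]
    rintro ⟨col, hcol⟩
    induction col using Fin.addCases with
    | left col => exact hbase col hcol
    | right g => exact not_hasMonoDoubleStarOfColor_appendGroups_natAdd s hmn g hcol

def threePartColoring (x y : Fin 3) : Fin 3 :=
  if x = y then 0 else if x = 0 ∨ y = 0 then 1 else 2

theorem grAvoid_threePart {n m j t N : ℕ} (hmn : m ≤ n) (ht : t ≤ n + m + 1)
    (hN : t + 2 * m + m * j = N) : grAvoid (3 + j) n m N := by
  refine grAvoid_appendGroups threePartColoring 0 ![m, m, t] hmn ?_ (by decide) (by decide) ?_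
  · simp [Fin.sum_univ_three, ← hN]; ring
  intro col
  fin_cases col
  · refine not_hasMonoDoubleStarOfColor_appendGroups_of_diag (fun x => ?_) (by decide)
    fin_cases x <;> simp <;> omega
  · exact not_hasMonoDoubleStarOfColor_appendGroups_of_crossing 0 le_rfl hmn (by decide) (by decide)
  · exact not_hasMonoDoubleStarOfColor_appendGroups_of_crossing 1 le_rfl hmn (by decide) (by decide)

def pentagonColoring (x y : Fin 5) : Fin 3 :=
  if x = y then 2 else if y = x + 1 ∨ x = y + 1 then 0 else 1

theorem grAvoid_pentagon {n m j h e N : ℕ} (hmn : m ≤ n) (hhe : 2 * h + e ≤ n)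
    (hN : 5 * h + e + m * j = N) : grAvoid (3 + j) n m N := by
  refine grAvoid_appendGroups pentagonColoring 2 (fun x => if x = 0 then h + e else h) hmn ?_
    (by decide) (by decide) ?_
  · simp [Fin.sum_univ_five, ← hN]; ring
  intro col
  fin_cases col
  · refine not_hasMonoDoubleStarOfColor_appendGroups_of_nbhd (fun x => {x + 1, x - 1})
      (fun x => ?_) (by decide) (by decide)
    fin_cases x <;> rw [sum_pair (by decide)] <;> simp <;> omega
  · refine not_hasMonoDoubleStarOfColor_appendGroups_of_nbhd (fun x => {x + 2, x - 2})
      (fun x => ?_) (by decide) (by decide)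
    fin_cases x <;> rw [sum_pair (by decide)] <;> simp <;> omega
  · refine not_hasMonoDoubleStarOfColor_appendGroups_of_diag (fun x => ?_) (by decide)
    split_ifs <;> omega

end GallaiDoubleStar

open GallaiDoubleStar

/-- For n ≥ m ≥ 1 and k ≥ 3, `gr_k(K_3 : S(n,m)) ≥ max{5(n/2), n+2m+1} + m(k-3) + 1`
for even `n` and `≥ max{5((n-1)/2), n+2m+1} + m(k-3) + 2` for odd `n`:
the complete graph on one fewer vertex admits an avoiding coloring. -/
theorem stmt_12 (n m k : ℕ) (hm : 1 ≤ m) (hmn : m ≤ n) (hk : 3 ≤ k) :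
    grAvoid k n m
      ((if Even n then max (5 * (n / 2)) (n + 2 * m + 1) + m * (k - 3) + 1
        else max (5 * ((n - 1) / 2)) (n + 2 * m + 1) + m * (k - 3) + 2) - 1) := by
  obtain ⟨j, rfl⟩ : ∃ j, k = 3 + j := ⟨k - 3, by omega⟩
  rw [Nat.add_sub_cancel_left]
  split_ifs
  · rcases le_total (5 * (n / 2)) (n + 2 * m + 1) with h | h
    · exact grAvoid_threePart (t := n + 1) hmn (by omega) (by omega)
    · exact grAvoid_pentagon (h := n / 2) (e := 0) hmn (by omega) (by omega)
  · rcases le_total (5 * ((n - 1) / 2)) (n + 2 * m + 1) with h | h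
    · exact grAvoid_threePart (t := n + 2) hmn (by omega) (by omega)
    · exact grAvoid_pentagon (h := (n - 1) / 2) (e := 1) hmn (by omega) (by omega)
end

section
/- Let n ≥ m ≥ 1 and let G be a 2-edge-colored complete graph obtained as a blow-up of the triangle-free 2-coloring of K_5, where each of the five parts is a clique of size ⌊n/2⌋ (or of size ⌈n/2⌉ for at most one part when n is odd) colored entirely with a third color. Then every vertex of G has degree at most n in each of the three colors, and consequently G contains no monochromatic copy of S(n,m). -/
open Finset

/-- In the blow-up of the triangle-free 2-coloring of `K_5` by cliques of size
`⌊n/2⌋` (at most one of size `⌈n/2⌉`) in a third color, every vertex has degree at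
most `n` in each color, so there is no monochromatic `S(n,m)`. -/
theorem stmt_14 {V : Type*} [Fintype V] [DecidableEq V] (n m : ℕ)
    (hm : 1 ≤ m) (hmn : m ≤ n)
    (d : Fin 5 → Fin 5 → Fin 2) (hd : IsSymmColoring d) (hdt : ¬ HasMonoTriangle d)
    (p : V → Fin 5)
    (hsize : ∀ i, (univ.filter (fun v => p v = i)).card = n / 2 ∨
      (univ.filter (fun v => p v = i)).card = (n + 1) / 2)
    (hone : ∀ i j, i ≠ j → (univ.filter (fun v => p v = i)).card = (n + 1) / 2 →
      (univ.filter (fun v => p v = j)).card = n / 2)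
    (c : V → V → Fin 3)
    (hin : ∀ u v : V, u ≠ v → p u = p v → c u v = 2)
    (hout : ∀ u v : V, p u ≠ p v → c u v = (d (p u) (p v)).castSucc) :
    (∀ (v : V) (col : Fin 3),
      (univ.filter (fun w => w ≠ v ∧ c v w = col)).card ≤ n) ∧
    ¬ HasMonoDoubleStar c n m := by
  classical
  have hn1 : 1 ≤ n := le_trans hm hmn
  set S : Fin 5 → Finset V := fun i => univ.filter (fun v => p v = i) with hS
  have hSle : ∀ i, (S i).card ≤ (n + 1) / 2 := by
    intro i; rcases hsize i with h | h <;> simp only [S] <;> omega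
  have hpair : ∀ i j, i ≠ j → (S i).card + (S j).card ≤ n := by
    intro i j hij
    rcases hsize i with h | h
    · have := hSle j; simp only [S] at *; omega
    · have := hone i j hij h; simp only [S] at *; omega
  have fin2 : ∀ e x y : Fin 2, x ≠ e → y ≠ e → x = y := by decide
  have hdeg5 : ∀ (i : Fin 5) (e : Fin 2),
      (univ.filter (fun j => j ≠ i ∧ d i j = e)).card ≤ 2 := by
    intro i e
    by_contra h
    push_neg at h
    obtain ⟨a, b, cc, ha, hb, hc, hab, hac, hbc⟩ := Finset.two_lt_card_iff.mp h
    simp only [mem_filter, mem_univ, true_and] at ha hb hc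
    by_cases h1 : d a b = e
    · exact hdt ⟨i, a, b, Ne.symm ha.1, Ne.symm hb.1, hab,
        ha.2.trans hb.2.symm, ha.2.trans h1.symm⟩
    by_cases h2 : d a cc = e
    · exact hdt ⟨i, a, cc, Ne.symm ha.1, Ne.symm hc.1, hac,
        ha.2.trans hc.2.symm, ha.2.trans h2.symm⟩
    by_cases h3 : d b cc = e
    · exact hdt ⟨i, b, cc, Ne.symm hb.1, Ne.symm hc.1, hbc,
        hb.2.trans hc.2.symm, hb.2.trans h3.symm⟩
    · exact hdt ⟨a, b, cc, hab, hac, hbc, fin2 e _ _ h1 h2, fin2 e _ _ h1 h3⟩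
  have hdeg : ∀ (v : V) (col : Fin 3),
      (univ.filter (fun w => w ≠ v ∧ c v w = col)).card ≤ n := by
    intro v col
    by_cases hcol : col = 2
    · have hsub : univ.filter (fun w => w ≠ v ∧ c v w = col) ⊆ (S (p v)).erase v := by
        intro w hw
        simp only [mem_filter, mem_univ, true_and] at hw
        obtain ⟨hwv, hcw⟩ := hw
        by_cases hp : p v = p w
        · refine Finset.mem_erase.mpr ⟨hwv, ?_⟩
          simp only [S, mem_filter, mem_univ, true_and]; exact hp.symm
        · exfalso
          have hc2 := hout v w hp
          rw [hcol, hc2] at hcw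
          have hlt : ((d (p v) (p w)).castSucc : Fin 3).val < 2 := (d (p v) (p w)).isLt
          rw [hcw] at hlt
          simp at hlt
      have hv : v ∈ S (p v) := by
        simp only [S, mem_filter, mem_univ, true_and]
      have h1 := Finset.card_le_card hsub
      rw [Finset.card_erase_of_mem hv] at h1
      have := hSle (p v)
      omega
    · have hcv : col.val < 2 := by
        have := col.isLt
        have : col.val ≠ 2 := fun h => hcol (Fin.ext h)
        omega
      set e : Fin 2 := ⟨col.val, hcv⟩ with he
      have hce : col = e.castSucc := by apply Fin.ext; simp [he]
      set T : Finset (Fin 5) := univ.filter (fun j => j ≠ p v ∧ d (p v) j = e) with hT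
      have hTcard : T.card ≤ 2 := hdeg5 (p v) e
      have hsub : univ.filter (fun w => w ≠ v ∧ c v w = col) ⊆ T.biUnion S := by
        intro w hw
        simp only [mem_filter, mem_univ, true_and] at hw
        obtain ⟨hwv, hcw⟩ := hw
        by_cases hp : p v = p w
        · exfalso
          have := hin v w (Ne.symm hwv) hp
          rw [this, hce] at hcw
          have hlt : ((e.castSucc : Fin 3)).val < 2 := e.isLt
          rw [← hcw] at hlt
          simp at hlt
        · have hc2 := hout v w hp
          rw [hc2, hce] at hcw
          have hde : d (p v) (p w) = e := Fin.castSucc_injective _ hcw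
          refine Finset.mem_biUnion.mpr ⟨p w, ?_, ?_⟩
          · simp only [T, mem_filter, mem_univ, true_and]
            exact ⟨fun h => hp h.symm, hde⟩
          · simp only [S, mem_filter, mem_univ, true_and]
      have h1 := (Finset.card_le_card hsub).trans (Finset.card_biUnion_le)
      have hsum : ∑ j ∈ T, (S j).card ≤ n := by
        interval_cases hc : T.card
        · rw [Finset.card_eq_zero.mp hc]; simp
        · obtain ⟨a, hTa⟩ := Finset.card_eq_one.mp hc
          rw [hTa, Finset.sum_singleton]
          have := hSle a; omega
        · obtain ⟨a, b, hab, hTab⟩ := Finset.card_eq_two.mp hc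
          rw [hTab, Finset.sum_pair hab]
          exact hpair a b hab
      omega
  refine ⟨hdeg, ?_⟩
  rintro ⟨u, v, A, B, col, huv, hA, hB, hAB, huA, huB, hvA, hvB, hcuv, hcA, hcB⟩
  have hsub : insert v A ⊆ univ.filter (fun w => w ≠ u ∧ c u w = col) := by
    intro w hw
    simp only [mem_insert] at hw
    simp only [mem_filter, mem_univ, true_and]
    rcases hw with rfl | hw
    · exact ⟨Ne.symm huv, hcuv⟩
    · exact ⟨fun h => huA (h ▸ hw), hcA w hw⟩
  have h1 := Finset.card_le_card hsub
  rw [Finset.card_insert_of_notMem hvA, hA] at h1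
  have := hdeg u col
  omega
end

section
/- Let n ≥ m ≥ 1, and let G be an edge-colored complete graph with no monochromatic S(n,m). Suppose vertex v has at least n + m + 1 incident edges of color red, with endpoints v_1, ..., v_{n+m+1}. Then each v_i has at most m incident red edges in total. -/
open Finset

/-- Choose the `m` leaves at `v` first, avoiding `u`; together with `v` they use up at most
`m + 1` elements of `Nu`, which leaves `n` leaves for `u`. -/
theorem HasMonoDoubleStar.of_card_le {V C : Type*} [DecidableEq V] {c : V → V → C} {n m : ℕ}
    {u v : V} {col : C} {Nu Nv : Finset V} (huv : u ≠ v) (hcuv : c u v = col)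
    (huNu : u ∉ Nu) (hvNv : v ∉ Nv) (hNu : ∀ x ∈ Nu, c u x = col)
    (hNv : ∀ x ∈ Nv, c v x = col) (hcardNu : n + m + 1 ≤ #Nu) (hcardNv : m + 1 ≤ #Nv) :
    HasMonoDoubleStar c n m := by
  obtain ⟨B, hBNv, rfl⟩ := exists_subset_card_eq (show m ≤ #(Nv.erase u) by
    have := pred_card_le_card_erase (s := Nv) (a := u); omega)
  obtain ⟨A, hANu, rfl⟩ := exists_subset_card_eq (show n ≤ #(Nu \ insert v B) by
    have := le_card_sdiff (insert v B) Nu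
    have := card_insert_le v B
    omega)
  have hB : B ⊆ Nv := hBNv.trans (erase_subset u Nv)
  refine ⟨u, v, A, B, col, huv, rfl, rfl, ?_, fun h => huNu (sdiff_subset (hANu h)),
    fun h => notMem_erase u Nv (hBNv h), fun h => (mem_sdiff.1 (hANu h)).2 (mem_insert_self v B),
    fun h => hvNv (hB h), hcuv, fun x hx => hNu x (sdiff_subset (hANu hx)),
    fun x hx => hNv x (hB hx)⟩
  exact disjoint_of_subset_left hANu (sdiff_disjoint.mono_right (subset_insert v B))

theorem stmt_17_general {V : Type*} [Fintype V] [DecidableEq V] {k n m : ℕ}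
    (c : V → V → Fin k) (hmono : ¬ HasMonoDoubleStar c n m)
    (red : Fin k) (v : V) (A : Finset V) (hvA : v ∉ A)
    (hA : n + m + 1 ≤ A.card) (hred : ∀ a ∈ A, c v a = red) :
    ∀ a ∈ A, (univ.filter (fun w => w ≠ a ∧ c a w = red)).card ≤ m := by
  intro a ha
  by_contra! hcard
  exact hmono <| HasMonoDoubleStar.of_card_le (ne_of_mem_of_not_mem ha hvA).symm (hred a ha)
    hvA (by simp) hred (fun x hx => (mem_filter.1 hx).2.2) hA hcard

/-- In a complete graph with no monochromatic `S(n,m)`, if `v` has at least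
`n+m+1` red neighbors `A`, then each vertex of `A` has at most `m` incident red
edges in total. -/
theorem stmt_17 {V : Type*} [Fintype V] [DecidableEq V] {k n m : ℕ}
    (hm : 1 ≤ m) (hmn : m ≤ n)
    (c : V → V → Fin k) (hsym : IsSymmColoring c) (hmono : ¬ HasMonoDoubleStar c n m)
    (red : Fin k) (v : V) (A : Finset V) (hvA : v ∉ A)
    (hA : n + m + 1 ≤ A.card) (hred : ∀ a ∈ A, c v a = red) :
    ∀ a ∈ A, (univ.filter (fun w => w ≠ a ∧ c a w = red)).card ≤ m :=
  stmt_17_general c hmono red v A hvA hA hred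
end
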